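/- arXiv:1406.6567 — 6 statements merged into one kernel-verified Lean document; each statement's English description precedes it below -/
import Mathlib

section
/- Let G be a finite simple graph, let k ≥ 1, and let I_0 and I_r be independent sets of G with |I_0| = |I_r| = k. Suppose I* is an independent set of G with |I*| ≥ k such that I* ∩ N_G[I_0 ∪ I_r] = ∅ (no vertex of I* lies in or is adjacent to a vertex of I_0 ∪ I_r). Then there exists a token-jumping reconfiguration sequence from I_0 to I_r of length at most 2k in which every independent set of the sequence is contained in I_0 ∪ I_r ∪ I*. -/
/-- `I` is an independent set of `G` (as a finset of vertices). -/
def IsIndepFinset {V : Type*} (G : SimpleGraph V) (I : Finset V) : Prop :=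
  ∀ u ∈ I, ∀ v ∈ I, ¬ G.Adj u v

/-- One token jump: exactly one token moves from `u ∈ I` to `v ∉ I`. -/
def TJStep {V : Type*} [DecidableEq V] (I J : Finset V) : Prop :=
  ∃ u v, u ∈ I ∧ v ∉ I ∧ I \ J = {u} ∧ J \ I = {v}

/-- `f 0, f 1, …, f ℓ` is a token-jumping reconfiguration sequence from `I` to `J`
in `G`, all of whose members are independent sets of cardinality `k`. -/
def TJSeq {V : Type*} [DecidableEq V] (G : SimpleGraph V) (k : ℕ)
    (I J : Finset V) (ℓ : ℕ) (f : ℕ → Finset V) : Prop :=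
  f 0 = I ∧ f ℓ = J ∧
  (∀ i ≤ ℓ, IsIndepFinset G (f i) ∧ (f i).card = k) ∧
  (∀ i < ℓ, TJStep (f i) (f (i + 1)))

/-- There is a token-jumping reconfiguration sequence from `I` to `J` in `G`. -/
def TJReachable {V : Type*} [DecidableEq V] (G : SimpleGraph V) (k : ℕ)
    (I J : Finset V) : Prop :=
  ∃ ℓ f, TJSeq G k I J ℓ f

/-- There is a token-jumping reconfiguration sequence from `I` to `J` in the
subgraph of `G` induced on the vertex set `W` (equivalently: a sequence in `G`
all of whose members are contained in `W`). -/
def TJReachableWithin {V : Type*} [DecidableEq V] (G : SimpleGraph V) (k : ℕ)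
    (I J : Finset V) (W : Finset V) : Prop :=
  ∃ ℓ f, TJSeq G k I J ℓ f ∧ ∀ i ≤ ℓ, f i ⊆ W

/-- `G` contains the complete bipartite graph `K_{p,q}` as a subgraph. -/
def ContainsKpq {V : Type*} (G : SimpleGraph V) (p q : ℕ) : Prop :=
  ∃ X Y : Finset V, Disjoint X Y ∧ X.card = p ∧ Y.card = q ∧
    ∀ x ∈ X, ∀ y ∈ Y, G.Adj x y

/-!
Fix `S ⊆ I*` with `|S| = k`. Since `S` is disjoint from and anticomplete to `I₀ ∪ Iᵣ`, both
`I₀ ∪ S` and `S ∪ Iᵣ` are independent, so any set between `I₀` and `S` (resp. `S` and `Iᵣ`) is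
independent. Jump the tokens of `I₀` onto `S` one at a time (`k` jumps), then those of `S` onto
`Iᵣ` (another `k` jumps).
-/

namespace IsIndepFinset

variable {V : Type*} {G : SimpleGraph V}

theorem mono {A B : Finset V} (hB : IsIndepFinset G B) (hAB : A ⊆ B) : IsIndepFinset G A :=
  fun u hu v hv => hB u (hAB hu) v (hAB hv)

theorem union [DecidableEq V] {A B : Finset V} (hA : IsIndepFinset G A) (hB : IsIndepFinset G B)
    (hAB : ∀ u ∈ A, ∀ v ∈ B, ¬ G.Adj u v) : IsIndepFinset G (A ∪ B) := by
  intro u hu v hv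
  rcases Finset.mem_union.mp hu with hu | hu <;> rcases Finset.mem_union.mp hv with hv | hv
  · exact hA u hu v hv
  · exact hAB u hu v hv
  · exact fun h => hAB v hv u hu h.symm
  · exact hB u hu v hv

end IsIndepFinset

section Sequences

variable {V : Type*}

def seqAppend (m : ℕ) (f g : ℕ → Finset V) (i : ℕ) : Finset V :=
  if i ≤ m then f i else g (i - m)

theorem seqAppend_of_le_of_eq {m i : ℕ} {f g : ℕ → Finset V} (hfg : f m = g 0) (hi : m ≤ i) :
    seqAppend m f g i = g (i - m) := by
  unfold seqAppend
  split_ifs with h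
  · rw [show i = m by omega, Nat.sub_self, hfg]
  · rfl

theorem seqAppend_subset {m n : ℕ} {f g : ℕ → Finset V} {W : Finset V}
    (hf : ∀ i ≤ m, f i ⊆ W) (hg : ∀ i ≤ n, g i ⊆ W) : ∀ i ≤ m + n, seqAppend m f g i ⊆ W := by
  intro i hi
  unfold seqAppend
  split_ifs with h
  · exact hf i h
  · exact hg (i - m) (by omega)

variable [DecidableEq V] {G : SimpleGraph V} {k : ℕ}

theorem TJSeq.append {A B C : Finset V} {m n : ℕ} {f g : ℕ → Finset V}
    (hf : TJSeq G k A B m f) (hg : TJSeq G k B C n g) :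
    TJSeq G k A C (m + n) (seqAppend m f g) := by
  obtain ⟨hf0, hfm, hfind, hfstep⟩ := hf
  obtain ⟨hg0, hgn, hgind, hgstep⟩ := hg
  have hfg : f m = g 0 := hfm.trans hg0.symm
  refine ⟨?_, ?_, fun i hi => ?_, fun i hi => ?_⟩
  · simpa [seqAppend] using hf0
  · rw [seqAppend_of_le_of_eq hfg (by omega), Nat.add_sub_cancel_left, hgn]
  · by_cases him : i ≤ m
    · simpa [seqAppend, him] using hfind i him
    · rw [seqAppend_of_le_of_eq hfg (by omega)]
      exact hgind (i - m) (by omega)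
  · by_cases him : i < m
    · simpa [seqAppend, him.le, Nat.succ_le_of_lt him] using hfstep i him
    · rw [seqAppend_of_le_of_eq hfg (by omega), seqAppend_of_le_of_eq hfg (by omega),
        show i + 1 - m = i - m + 1 by omega]
      exact hgstep (i - m) (by omega)

theorem TJSeq.single {A B : Finset V} (hA : IsIndepFinset G A) (hB : IsIndepFinset G B)
    (hAk : A.card = k) (hBk : B.card = k) (hAB : TJStep A B) :
    TJSeq G k A B 1 (fun i => if i = 0 then A else B) := by
  refine ⟨rfl, rfl, fun i hi => ?_, fun i hi => ?_⟩
  · dsimp only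
    split_ifs
    exacts [⟨hA, hAk⟩, ⟨hB, hBk⟩]
  · simpa [show i = 0 by omega] using hAB

theorem tjStep_union_erase_insert {A C : Finset V} {a b : V} (ha : a ∈ A) (haC : a ∉ C)
    (hbA : b ∉ A) (hbC : b ∉ C) : TJStep (A ∪ C) (A.erase a ∪ insert b C) := by
  refine ⟨a, b, Finset.mem_union_left C ha, by simp [hbA, hbC], ?_, ?_⟩ <;>
    ext x <;> simp only [Finset.mem_sdiff, Finset.mem_union, Finset.mem_erase, Finset.mem_insert,
      Finset.mem_singleton] <;> grind

/-- After each jump `a ↦ b` the new token `b` joins the tokens `C` that stay put, which is what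
makes the induction on `|A|` go through. -/
theorem exists_tjSeq_union_of_disjoint (n : ℕ) :
    ∀ A B C : Finset V, A.card = n → B.card = n → Disjoint A B → Disjoint A C → Disjoint B C →
      IsIndepFinset G (A ∪ B ∪ C) →
      ∃ f, TJSeq G (n + C.card) (A ∪ C) (B ∪ C) n f ∧ ∀ i ≤ n, f i ⊆ A ∪ B ∪ C := by
  induction n with
  | zero =>
    intro A B C hA hB _ _ _ hind
    obtain rfl : A = ∅ := Finset.card_eq_zero.mp hA
    obtain rfl : B = ∅ := Finset.card_eq_zero.mp hB
    refine ⟨fun _ => ∅ ∪ C, ⟨rfl, rfl, fun i _ => ⟨hind.mono ?_, by simp⟩, by simp⟩,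
      fun i _ => by simp⟩
    simp
  | succ n ih =>
    intro A B C hA hB hAB hAC hBC hind
    obtain ⟨a, ha⟩ : A.Nonempty := Finset.card_pos.mp (by omega)
    obtain ⟨b, hb⟩ : B.Nonempty := Finset.card_pos.mp (by omega)
    have haC : a ∉ C := Finset.disjoint_left.mp hAC ha
    have hbA : b ∉ A := Finset.disjoint_right.mp hAB hb
    have hbC : b ∉ C := Finset.disjoint_left.mp hBC hb
    have hsub : A.erase a ∪ B.erase b ∪ insert b C ⊆ A ∪ B ∪ C := by
      intro x; simp only [Finset.mem_union, Finset.mem_erase, Finset.mem_insert]; grind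
    obtain ⟨g, hg, hgW⟩ := ih (A.erase a) (B.erase b) (insert b C)
      (by rw [Finset.card_erase_of_mem ha, hA, Nat.add_sub_cancel])
      (by rw [Finset.card_erase_of_mem hb, hB, Nat.add_sub_cancel])
      (Finset.disjoint_of_subset_left (Finset.erase_subset a A)
        (Finset.disjoint_of_subset_right (Finset.erase_subset b B) hAB))
      (Finset.disjoint_insert_right.mpr
        ⟨fun h => hbA (Finset.mem_of_mem_erase h),
          Finset.disjoint_of_subset_left (Finset.erase_subset a A) hAC⟩)
      (Finset.disjoint_insert_right.mpr
        ⟨Finset.notMem_erase b B, Finset.disjoint_of_subset_left (Finset.erase_subset b B) hBC⟩)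
      (hind.mono hsub)
    have hBC' : B.erase b ∪ insert b C = B ∪ C := by
      ext x; simp only [Finset.mem_union, Finset.mem_erase, Finset.mem_insert]; grind
    have hk : n + (insert b C).card = 1 + n + C.card := by
      rw [Finset.card_insert_of_notMem hbC]; omega
    rw [hk, hBC'] at hg
    have hcard : (A ∪ C).card = 1 + n + C.card := by
      rw [Finset.card_union_of_disjoint hAC, hA]; omega
    have hAC_sub : A ∪ C ⊆ A ∪ B ∪ C := Finset.union_subset_union_left Finset.subset_union_left
    have hg0 := hg.2.2.1 0 (Nat.zero_le n)
    rw [hg.1] at hg0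
    have hfirst := TJSeq.single (hind.mono hAC_sub) hg0.1 hcard hg0.2
      (tjStep_union_erase_insert ha haC hbA hbC)
    rw [Nat.add_comm n 1]
    refine ⟨seqAppend 1 _ g, hfirst.append hg,
      seqAppend_subset (fun i _ => ?_) fun i hi => (hgW i hi).trans hsub⟩
    split_ifs
    exacts [hAC_sub, (Finset.union_subset_union_left Finset.subset_union_left).trans hsub]

theorem exists_tjSeq_of_disjoint {A B : Finset V} (hAB : Disjoint A B) (hA : A.card = k)
    (hB : B.card = k) (hind : IsIndepFinset G (A ∪ B)) :
    ∃ f, TJSeq G k A B k f ∧ ∀ i ≤ k, f i ⊆ A ∪ B := by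
  simpa using exists_tjSeq_union_of_disjoint k A B ∅ hA hB hAB (Finset.disjoint_empty_right A)
    (Finset.disjoint_empty_right B) (by simpa using hind)

end Sequences

theorem buffer_gives_short_sequence_general {V : Type*} [DecidableEq V]
    (G : SimpleGraph V) (k : ℕ) (I0 Ir Istar : Finset V)
    (hI0 : IsIndepFinset G I0) (hIr : IsIndepFinset G Ir)
    (hI0k : I0.card = k) (hIrk : Ir.card = k)
    (hstar : IsIndepFinset G Istar) (hstark : k ≤ Istar.card)
    (havoid : ∀ v ∈ Istar, v ∉ I0 ∪ Ir ∧ ∀ u ∈ I0 ∪ Ir, ¬ G.Adj u v) :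
    ∃ ℓ ≤ 2 * k, ∃ f : ℕ → Finset V,
      TJSeq G k I0 Ir ℓ f ∧ ∀ i ≤ ℓ, f i ⊆ I0 ∪ Ir ∪ Istar := by
  obtain ⟨S, hSstar, hSk⟩ := Finset.exists_subset_card_eq hstark
  have hS : ∀ v ∈ S, v ∉ I0 ∪ Ir ∧ ∀ u ∈ I0 ∪ Ir, ¬ G.Adj u v := fun v hv => havoid v (hSstar hv)
  have hI0S : Disjoint I0 S :=
    Finset.disjoint_right.mpr fun v hv hv0 => (hS v hv).1 (Finset.mem_union_left Ir hv0)
  have hSIr : Disjoint S Ir :=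
    Finset.disjoint_left.mpr fun v hv hvr => (hS v hv).1 (Finset.mem_union_right I0 hvr)
  have hindS := hstar.mono hSstar
  obtain ⟨f, hf, hfW⟩ := exists_tjSeq_of_disjoint hI0S hI0k hSk <|
    hI0.union hindS fun u hu v hv => (hS v hv).2 u (Finset.mem_union_left Ir hu)
  obtain ⟨g, hg, hgW⟩ := exists_tjSeq_of_disjoint hSIr hSk hIrk <|
    hindS.union hIr fun u hu v hv h => (hS u hu).2 v (Finset.mem_union_right I0 hv) h.symm
  refine ⟨k + k, by omega, seqAppend k f g, hf.append hg, seqAppend_subset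
    (fun i hi => (hfW i hi).trans ?_) (fun i hi => (hgW i hi).trans ?_)⟩
  · exact Finset.union_subset_union Finset.subset_union_left hSstar
  · exact Finset.union_subset (hSstar.trans Finset.subset_union_right)
      (Finset.subset_union_right.trans Finset.subset_union_left)

/-- an independent "buffer" `I*` of size ≥ k avoiding the closed
neighborhood of `I₀ ∪ Iᵣ` yields a reconfiguration sequence of length at most `2k`
staying inside `I₀ ∪ Iᵣ ∪ I*`. -/
theorem buffer_gives_short_sequence {V : Type*} [Fintype V] [DecidableEq V]
    (G : SimpleGraph V) (k : ℕ) (hk : 1 ≤ k) (I0 Ir Istar : Finset V)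
    (hI0 : IsIndepFinset G I0) (hIr : IsIndepFinset G Ir)
    (hI0k : I0.card = k) (hIrk : Ir.card = k)
    (hstar : IsIndepFinset G Istar) (hstark : k ≤ Istar.card)
    (havoid : ∀ v ∈ Istar, v ∉ I0 ∪ Ir ∧ ∀ u ∈ I0 ∪ Ir, ¬ G.Adj u v) :
    ∃ ℓ ≤ 2 * k, ∃ f : ℕ → Finset V,
      TJSeq G k I0 Ir ℓ f ∧ ∀ i ≤ ℓ, f i ⊆ I0 ∪ Ir ∪ Istar :=
  buffer_gives_short_sequence_general G k I0 Ir Istar hI0 hIr hI0k hIrk hstar hstark havoid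
end

section
/- Let G be a finite simple graph, let k ≥ 1, and let I_0 and I_r be independent sets of G with |I_0| = |I_r| = k. Suppose I' is an independent set of G with |I'| ≥ 2k that is disjoint from I_0 ∪ I_r, such that at most one vertex of I_0 has a neighbor in I' and at most one vertex of I_r has a neighbor in I'. Then there exists a token-jumping reconfiguration sequence from I_0 to I_r. -/
set_option linter.unusedSectionVars false

section Helpers

variable {V : Type*} [DecidableEq V] {G : SimpleGraph V} {k : ℕ}

lemma indep_mono {I J : Finset V} (h : IsIndepFinset G J) (hIJ : I ⊆ J) :
    IsIndepFinset G I := fun u hu v hv => h u (hIJ hu) v (hIJ hv)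

lemma indep_union {D E : Finset V} (hD : IsIndepFinset G D) (hE : IsIndepFinset G E)
    (hDE : ∀ u ∈ D, ∀ v ∈ E, ¬ G.Adj u v) : IsIndepFinset G (D ∪ E) := by
  intro x hx y hy
  rcases Finset.mem_union.mp hx with hx | hx <;> rcases Finset.mem_union.mp hy with hy | hy
  · exact hD x hx y hy
  · exact hDE x hx y hy
  · exact fun h => hDE y hy x hx h.symm
  · exact hE x hx y hy

lemma tj_refl {I : Finset V} (hI : IsIndepFinset G I) (hc : I.card = k) :
    TJReachable G k I I :=
  ⟨0, fun _ => I, rfl, rfl, fun _ _ => ⟨hI, hc⟩, fun i hi => absurd hi (by omega)⟩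

lemma tjstep_symm {I J : Finset V} (h : TJStep I J) : TJStep J I := by
  obtain ⟨u, v, hu, hv, h1, h2⟩ := h
  refine ⟨v, u, ?_, ?_, h2, h1⟩
  · have : v ∈ J \ I := h2 ▸ Finset.mem_singleton_self v
    exact (Finset.mem_sdiff.mp this).1
  · have : u ∈ I \ J := h1 ▸ Finset.mem_singleton_self u
    exact (Finset.mem_sdiff.mp this).2

lemma tj_symm {I J : Finset V} (h : TJReachable G k I J) : TJReachable G k J I := by
  obtain ⟨ℓ, f, h0, hℓ, hind, hstep⟩ := h
  refine ⟨ℓ, fun i => f (ℓ - i), by simp [hℓ], by simp [h0], fun i hi => hind _ (by omega),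
    fun i hi => ?_⟩
  have hs := hstep (ℓ - (i + 1)) (by omega)
  have he : ℓ - (i + 1) + 1 = ℓ - i := by omega
  rw [he] at hs
  exact tjstep_symm hs

lemma tj_trans {I J K : Finset V} (h1 : TJReachable G k I J) (h2 : TJReachable G k J K) :
    TJReachable G k I K := by
  obtain ⟨ℓ1, f, hf0, hfl, hfind, hfstep⟩ := h1
  obtain ⟨ℓ2, g, hg0, hgl, hgind, hgstep⟩ := h2
  refine ⟨ℓ1 + ℓ2, fun i => if i ≤ ℓ1 then f i else g (i - ℓ1), by simp [hf0], ?_, ?_, ?_⟩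
  · by_cases h : ℓ1 + ℓ2 ≤ ℓ1
    · have : ℓ2 = 0 := by omega
      subst this
      simpa [hfl, ← hg0] using hgl.symm ▸ rfl
    · simp only [h, if_neg, if_false]
      rw [Nat.add_sub_cancel_left, hgl]
  · intro i hi
    by_cases h : i ≤ ℓ1
    · simpa [h] using hfind i h
    · simpa [h] using hgind (i - ℓ1) (by omega)
  · intro i hi
    by_cases h : i + 1 ≤ ℓ1
    · simpa [h, Nat.le_of_succ_le h] using hfstep i (by omega)
    · by_cases h' : i ≤ ℓ1
      · have : i = ℓ1 := by omega
        subst this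
        have h2 : 0 < ℓ2 := by omega
        have := hgstep 0 h2
        simp only [h', if_pos, h, if_neg, if_false, Nat.add_sub_cancel_left]
        rwa [hfl, ← hg0]
      · have := hgstep (i - ℓ1) (by omega)
        have he : i + 1 - ℓ1 = i - ℓ1 + 1 := by omega
        simp only [h', if_neg, if_false, show ¬ (i+1 ≤ ℓ1) by omega, he]
        exact this

lemma tj_single {I J : Finset V} (hI : IsIndepFinset G I) (hIc : I.card = k)
    (hJ : IsIndepFinset G J) (hJc : J.card = k) (h : TJStep I J) :
    TJReachable G k I J := by
  refine ⟨1, fun i => if i = 0 then I else J, by simp, by simp, ?_, ?_⟩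
  · intro i hi
    by_cases h0 : i = 0 <;> simp [h0, hI, hIc, hJ, hJc]
  · intro i hi
    have : i = 0 := by omega
    subst this
    simpa using h

end Helpers

section Main

variable {V : Type*} [DecidableEq V] {G : SimpleGraph V} {k : ℕ}

lemma tj_fill (I' A : Finset V) (hI' : IsIndepFinset G I') (hA : A ⊆ I') (hAk : A.card = k) :
    ∀ n (D T : Finset V), D.card = n → Disjoint D I' →
      IsIndepFinset G D → (∀ u ∈ D, ∀ v ∈ I', ¬ G.Adj u v) →
      T ⊆ A → D.card + T.card = k → TJReachable G k (D ∪ T) A := by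
  intro n
  induction n with
  | zero =>
    intro D T hD hdisj _ _ hTA hcard
    have hDe : D = ∅ := Finset.card_eq_zero.mp hD
    subst hDe
    have hTA' : T = A := Finset.eq_of_subset_of_card_le hTA (by simp at hcard ⊢; omega)
    rw [Finset.empty_union, hTA']
    exact tj_refl (indep_mono hI' hA) hAk
  | succ n ih =>
    intro D T hD hdisj hDind hno hTA hcard
    obtain ⟨u, hu⟩ := Finset.card_pos.mp (by omega : 0 < D.card)
    have hTcard : T.card < A.card := by
      have hTsub := Finset.card_le_card hTA
      omega
    have hss : T ⊂ A := hTA.ssubset_of_ne (fun h => by rw [h] at hTcard; omega)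
    obtain ⟨a, haA, haT⟩ := Finset.exists_of_ssubset hss
    have haI' : a ∈ I' := hA haA
    have haD : a ∉ D := fun h => (Finset.disjoint_left.mp hdisj h) haI'
    have hTI' : T ⊆ I' := hTA.trans hA
    have huT : u ∉ T := fun h => (Finset.disjoint_left.mp hdisj hu) (hTI' h)
    have hua : u ≠ a := fun h => haD (h ▸ hu)
    -- step from D ∪ T to (D.erase u) ∪ insert a T
    set J : Finset V := (D.erase u) ∪ insert a T with hJ
    have hdisj' : Disjoint (D.erase u) I' := Finset.disjoint_of_subset_left (Finset.erase_subset _ _) hdisj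
    have hstep : TJStep (D ∪ T) J := by
      refine ⟨u, a, Finset.mem_union_left _ hu, ?_, ?_, ?_⟩
      · simp only [Finset.mem_union]
        tauto
      · ext x
        simp only [Finset.mem_sdiff, Finset.mem_union, Finset.mem_erase, Finset.mem_insert,
          Finset.mem_singleton, hJ]
        constructor
        · rintro ⟨h1, h2⟩
          by_contra hx
          rcases h1 with h1 | h1
          · exact h2 (Or.inl ⟨hx, h1⟩)
          · exact h2 (Or.inr (Or.inr h1))
        · rintro rfl
          refine ⟨Or.inl hu, ?_⟩
          push_neg
          exact ⟨fun h _ => absurd rfl h, hua, huT⟩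
      · ext x
        simp only [Finset.mem_sdiff, Finset.mem_union, Finset.mem_erase, Finset.mem_insert,
          Finset.mem_singleton, hJ]
        constructor
        · rintro ⟨h1, h2⟩
          push_neg at h2
          rcases h1 with ⟨hne, h1⟩ | h1 | h1
          · exact absurd h1 h2.1
          · exact h1
          · exact absurd h1 h2.2
        · rintro rfl
          exact ⟨Or.inr (Or.inl rfl), fun h => h.elim haD haT⟩
    have hJind : IsIndepFinset G J := by
      apply indep_union
      · exact indep_mono hDind (Finset.erase_subset _ _)
      · exact indep_mono hI' (fun x hx => by
          rcases Finset.mem_insert.mp hx with rfl | hx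
          · exact haI'
          · exact hTI' hx)
      · intro x hx y hy
        exact hno x (Finset.mem_of_mem_erase hx) y (by
          rcases Finset.mem_insert.mp hy with rfl | hy
          · exact haI'
          · exact hTI' hy)
    have hIcard : (D ∪ T).card = k := by
      rw [Finset.card_union_of_disjoint (Finset.disjoint_of_subset_right hTI' hdisj)]
      exact hcard
    have hJcard : J.card = k := by
      rw [hJ, Finset.card_union_of_disjoint (Finset.disjoint_of_subset_right
        (by intro x hx; rcases Finset.mem_insert.mp hx with rfl | hx; exacts [haI', hTI' hx]) hdisj'),
        Finset.card_erase_of_mem hu, Finset.card_insert_of_notMem haT]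
      omega
    have hIind : IsIndepFinset G (D ∪ T) :=
      indep_union hDind (indep_mono hI' hTI') (fun x hx y hy => hno x hx y (hTI' hy))
    refine tj_trans (tj_single hIind hIcard hJind hJcard hstep) ?_
    apply ih (D.erase u) (insert a T) (by rw [Finset.card_erase_of_mem hu]; omega) hdisj'
      (indep_mono hDind (Finset.erase_subset _ _))
      (fun x hx => hno x (Finset.mem_of_mem_erase hx))
      (Finset.insert_subset haA hTA)
    rw [Finset.card_erase_of_mem hu, Finset.card_insert_of_notMem haT]
    omega

lemma tj_enter [DecidableRel G.Adj] (hk : 1 ≤ k) (I0 I' A : Finset V)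
    (hI0 : IsIndepFinset G I0) (hI0k : I0.card = k)
    (hI' : IsIndepFinset G I') (hA : A ⊆ I') (hAk : A.card = k)
    (hdisj : Disjoint I0 I')
    (h0 : (I0.filter (fun u => ∃ v ∈ I', G.Adj u v)).card ≤ 1) :
    TJReachable G k I0 A := by
  by_cases hB : (I0.filter (fun u => ∃ v ∈ I', G.Adj u v)).Nonempty
  · -- there is a (unique) bad vertex u0; move it first, then fill
    obtain ⟨u0, hu0B⟩ := hB
    have hu0 : ∀ x ∈ I0.filter (fun u => ∃ v ∈ I', G.Adj u v), x = u0 :=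
      fun x hx => Finset.card_le_one.mp h0 x hx u0 hu0B
    have hmem : u0 ∈ I0 := (Finset.mem_filter.mp hu0B).1
    obtain ⟨a0, ha0⟩ := Finset.card_pos.mp (by omega : 0 < A.card)
    have ha0I' : a0 ∈ I' := hA ha0
    have ha0I0 : a0 ∉ I0 := fun h => (Finset.disjoint_left.mp hdisj h) ha0I'
    have hu0a0 : u0 ≠ a0 := fun h => ha0I0 (h ▸ hmem)
    have hno : ∀ x ∈ I0.erase u0, ∀ v ∈ I', ¬ G.Adj x v := by
      intro x hx v hv hadj
      have : x ∈ I0.filter (fun u => ∃ v ∈ I', G.Adj u v) :=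
        Finset.mem_filter.mpr ⟨Finset.mem_of_mem_erase hx, v, hv, hadj⟩
      exact (Finset.ne_of_mem_erase hx) (hu0 x this)
    set J : Finset V := (I0.erase u0) ∪ {a0} with hJ
    have hstep : TJStep I0 J := by
      refine ⟨u0, a0, hmem, ha0I0, ?_, ?_⟩
      · ext x
        simp only [Finset.mem_sdiff, Finset.mem_union, Finset.mem_erase,
          Finset.mem_singleton, hJ]
        constructor
        · rintro ⟨h1, h2⟩
          by_contra hx
          exact h2 (Or.inl ⟨hx, h1⟩)
        · rintro rfl
          refine ⟨hmem, ?_⟩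
          push_neg
          exact ⟨fun h _ => absurd rfl h, hu0a0⟩
      · ext x
        simp only [Finset.mem_sdiff, Finset.mem_union, Finset.mem_erase,
          Finset.mem_singleton, hJ]
        constructor
        · rintro ⟨h1 | h1, h2⟩
          · exact absurd h1.2 h2
          · exact h1
        · rintro rfl
          exact ⟨Or.inr rfl, ha0I0⟩
    have hJind : IsIndepFinset G J := by
      apply indep_union
      · exact indep_mono hI0 (Finset.erase_subset _ _)
      · exact indep_mono hI' (by simpa using ha0I')
      · intro x hx y hy
        rw [Finset.mem_singleton] at hy
        exact hy ▸ hno x hx a0 ha0I'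
    have hJcard : J.card = k := by
      rw [hJ, Finset.card_union_of_disjoint, Finset.card_erase_of_mem hmem, Finset.card_singleton]
      · omega
      · simp only [Finset.disjoint_singleton_right, Finset.mem_erase]
        tauto
    refine tj_trans (tj_single hI0 hI0k hJind hJcard hstep) ?_
    exact tj_fill I' A hI' hA hAk (I0.erase u0).card (I0.erase u0) {a0} rfl
      (Finset.disjoint_of_subset_left (Finset.erase_subset _ _) hdisj)
      (indep_mono hI0 (Finset.erase_subset _ _)) hno
      (Finset.singleton_subset_iff.mpr ha0)
      (by rw [Finset.card_erase_of_mem hmem, Finset.card_singleton]; omega)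
  · -- no bad vertex at all
    have hno : ∀ x ∈ I0, ∀ v ∈ I', ¬ G.Adj x v := by
      intro x hx v hv hadj
      exact hB ⟨x, Finset.mem_filter.mpr ⟨hx, v, hv, hadj⟩⟩
    have := tj_fill I' A hI' hA hAk I0.card I0 ∅ rfl hdisj hI0 hno
      (Finset.empty_subset _) (by simpa using hI0k)
    simpa using this

end Main

/-- an independent set `I'` of size ≥ 2k disjoint from `I₀ ∪ Iᵣ`,
with at most one vertex of `I₀` and at most one vertex of `Iᵣ` having a neighbor
in `I'`, yields a reconfiguration sequence from `I₀` to `Iᵣ`. -/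
theorem almost_buffer_gives_sequence {V : Type*} [Fintype V] [DecidableEq V]
    (G : SimpleGraph V) [DecidableRel G.Adj] (k : ℕ) (hk : 1 ≤ k)
    (I0 Ir I' : Finset V)
    (hI0 : IsIndepFinset G I0) (hIr : IsIndepFinset G Ir)
    (hI0k : I0.card = k) (hIrk : Ir.card = k)
    (hI' : IsIndepFinset G I') (hI'card : 2 * k ≤ I'.card)
    (hdisj : Disjoint I' (I0 ∪ Ir))
    (h0 : (I0.filter (fun u => ∃ v ∈ I', G.Adj u v)).card ≤ 1)
    (hr : (Ir.filter (fun u => ∃ v ∈ I', G.Adj u v)).card ≤ 1) :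
    TJReachable G k I0 Ir := by
  obtain ⟨A, hA, hAk⟩ := Finset.exists_subset_card_eq (show k ≤ I'.card by omega)
  have hd0 : Disjoint I0 I' :=
    (Finset.disjoint_of_subset_right Finset.subset_union_left hdisj).symm
  have hdr : Disjoint Ir I' :=
    (Finset.disjoint_of_subset_right Finset.subset_union_right hdisj).symm
  exact tj_trans (tj_enter hk I0 I' A hI0 hI0k hI' hA hAk hd0 h0)
    (tj_symm (tj_enter hk Ir I' A hIr hIrk hI' hA hAk hdr hr))
end

section
/- Let t ≥ 3 and k ≥ 1 be integers, let G = (V, E) be a finite simple graph that is K_{3,t}-forbidden, and let I_0 and I_r be independent sets of G with |I_0| = |I_r| = k. Let u_1 and u_2 be two distinct vertices of G, and let N be a set of vertices of G disjoint from I_0 ∪ I_r ∪ {u_1, u_2} such that every vertex of N is adjacent to both u_1 and u_2. Let B ⊆ N with |B| ≥ C((2t+1)k + t + 1, t + 2) (a binomial coefficient). Then there exists a token-jumping reconfiguration sequence from I_0 to I_r in G if and only if there exists one in the subgraph of G induced on V \ (N \ B). -/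
open Finset

/-- Single token-jumping step relation staying inside `W`. -/
def TJStepRelW {V : Type*} [DecidableEq V] (G : SimpleGraph V) (k : ℕ) (W : Finset V)
    (J J' : Finset V) : Prop :=
  TJStep J J' ∧ IsIndepFinset G J' ∧ J'.card = k ∧ J' ⊆ W

lemma tjstep_insert_erase {V : Type*} [DecidableEq V] {J : Finset V} {s b : V}
    (hs : s ∈ J) (hb : b ∉ J) : TJStep J (insert b (J.erase s)) := by
  have hsb : s ≠ b := fun h => hb (h ▸ hs)
  refine ⟨s, b, hs, hb, ?_, ?_⟩
  · ext x
    simp only [mem_sdiff, mem_insert, mem_erase, mem_singleton]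
    constructor
    · rintro ⟨hx, hx2⟩
      by_contra hxs
      exact hx2 (Or.inr ⟨hxs, hx⟩)
    · rintro rfl
      exact ⟨hs, by push_neg; exact ⟨hsb, fun h => absurd rfl h⟩⟩
  · ext x
    simp only [mem_sdiff, mem_insert, mem_erase, mem_singleton]
    constructor
    · rintro ⟨hx1 | ⟨_, hx⟩, hx2⟩
      · exact hx1
      · exact absurd hx hx2
    · rintro rfl
      exact ⟨Or.inl rfl, hb⟩

lemma card_insert_erase {V : Type*} [DecidableEq V] {J : Finset V} {s b : V}
    (hs : s ∈ J) (hb : b ∉ J) : (insert b (J.erase s)).card = J.card := by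
  rw [card_insert_of_notMem (fun h => hb (mem_of_mem_erase h)), card_erase_of_mem hs]
  have : 0 < J.card := card_pos.2 ⟨s, hs⟩
  omega

lemma indep_insert_erase {V : Type*} [DecidableEq V] {G : SimpleGraph V} {J : Finset V}
    {s b : V} (hJ : IsIndepFinset G J) (hb : ∀ x ∈ J.erase s, ¬ G.Adj x b) :
    IsIndepFinset G (insert b (J.erase s)) := by
  intro x hx y hy
  simp only [mem_insert] at hx hy
  rcases hx with rfl | hx <;> rcases hy with rfl | hy
  · exact G.irrefl
  · exact fun h => hb y hy h.symm
  · exact hb x hx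
  · exact hJ x (mem_of_mem_erase hx) y (mem_of_mem_erase hy)

lemma step_decomp {V : Type*} [DecidableEq V] {I J : Finset V} (h : TJStep I J) :
    ∃ u v, u ∈ I ∧ v ∉ I ∧ v ∈ J ∧ u ∉ J ∧ J = insert v (I.erase u) := by
  obtain ⟨u, v, hu, hv, h1, h2⟩ := h
  have huJ : u ∉ J := by
    have : u ∈ I \ J := h1 ▸ mem_singleton_self u
    exact (mem_sdiff.1 this).2
  have hvJ : v ∈ J := by
    have : v ∈ J \ I := h2 ▸ mem_singleton_self v
    exact (mem_sdiff.1 this).1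
  refine ⟨u, v, hu, hv, hvJ, huJ, ?_⟩
  ext x
  simp only [mem_insert, mem_erase]
  constructor
  · intro hx
    by_cases hxI : x ∈ I
    · exact Or.inr ⟨fun he => huJ (he ▸ hx), hxI⟩
    · left
      have : x ∈ J \ I := mem_sdiff.2 ⟨hx, hxI⟩
      rw [h2] at this
      exact mem_singleton.1 this
  · rintro (rfl | ⟨hxu, hxI⟩)
    · exact hvJ
    · by_contra hxJ
      have : x ∈ I \ J := mem_sdiff.2 ⟨hxI, hxJ⟩
      rw [h1] at this
      exact hxu (mem_singleton.1 this)

lemma choose_lb : ∀ (r n : ℕ), 1 ≤ r → r ≤ n → n + 1 - r ≤ n.choose r := by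
  intro r
  induction r with
  | zero => intro n h; omega
  | succ r ih =>
    intro n _ hrn
    rcases Nat.eq_zero_or_pos r with rfl | hr
    · simp [Nat.choose_one_right]
    · obtain ⟨m, rfl⟩ : ∃ m, n = m + 1 := ⟨n - 1, by omega⟩
      have h1 := ih m hr (by omega)
      calc m + 1 + 1 - (r+1) = m + 1 - r := by omega
        _ ≤ m.choose r := h1
        _ ≤ m.choose r + m.choose (r+1) := Nat.le_add_right _ _
        _ = (m+1).choose (r+1) := (Nat.choose_succ_succ m r).symm

lemma chain_to_within {V : Type*} [DecidableEq V] {G : SimpleGraph V} {k : ℕ}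
    {W I J : Finset V} (hI : IsIndepFinset G I) (hIc : I.card = k) (hIW : I ⊆ W)
    (h : Relation.ReflTransGen (TJStepRelW G k W) I J) : TJReachableWithin G k I J W := by
  induction h with
  | refl =>
    exact ⟨0, fun _ => I, ⟨rfl, rfl, fun i _ => ⟨hI, hIc⟩,
      fun i hi => absurd hi (Nat.not_lt_zero i)⟩, fun i _ => hIW⟩
  | @tail b c hab hbc ih =>
    obtain ⟨ℓ, f, ⟨hf0, hfl, hmem, hstep⟩, hW⟩ := ih
    refine ⟨ℓ + 1, fun i => if i ≤ ℓ then f i else c, ⟨?_, ?_, ?_, ?_⟩, ?_⟩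
    · simp [Nat.zero_le, hf0]
    · simp
    · intro i hi
      by_cases h' : i ≤ ℓ
      · simpa [h'] using hmem i h'
      · simp only [if_neg h']
        exact ⟨hbc.2.1, hbc.2.2.1⟩
    · intro i hi
      by_cases h' : i < ℓ
      · simpa [Nat.le_of_lt h', Nat.succ_le_of_lt h'] using hstep i h'
      · have hi' : i = ℓ := by omega
        subst hi'
        simpa [Nat.lt_irrefl, hfl] using hbc.1
    · intro i hi
      by_cases h' : i ≤ ℓ
      · simpa [h'] using hW i h'
      · simpa [h'] using hbc.2.2.2

/-- shrinking a common-neighborhood set `N` (of two vertices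
`u₁ ≠ u₂`) down to a large enough subset `B` preserves reconfigurability. -/
theorem shrink_preserves_reconfigurability {V : Type*} [Fintype V] [DecidableEq V]
    (G : SimpleGraph V) (t k : ℕ) (ht : 3 ≤ t) (hk : 1 ≤ k)
    (hforb : ¬ ContainsKpq G 3 t) (I0 Ir : Finset V)
    (hI0 : IsIndepFinset G I0) (hIr : IsIndepFinset G Ir)
    (hI0k : I0.card = k) (hIrk : Ir.card = k)
    (u1 u2 : V) (hne : u1 ≠ u2) (N : Finset V)
    (hNdisj : Disjoint N (I0 ∪ Ir ∪ {u1, u2}))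
    (hadj : ∀ v ∈ N, G.Adj v u1 ∧ G.Adj v u2)
    (B : Finset V) (hBN : B ⊆ N)
    (hBcard : ((2 * t + 1) * k + t + 1).choose (t + 2) ≤ B.card) :
    TJReachable G k I0 Ir ↔
      TJReachableWithin G k I0 Ir (Finset.univ \ (N \ B)) := by
  classical
  set W : Finset V := Finset.univ \ (N \ B) with hWdef
  have hNu : ∀ x ∈ N, x ≠ u1 ∧ x ≠ u2 ∧ x ∉ I0 ∧ x ∉ Ir := by
    intro x hx
    have h := Finset.disjoint_left.1 hNdisj hx
    simp only [Finset.mem_union, Finset.mem_insert, Finset.mem_singleton] at h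
    push_neg at h
    exact ⟨h.2.1, h.2.2, h.1.1, h.1.2⟩
  have hBW : ∀ b ∈ B, b ∈ W := by
    intro b hb
    rw [hWdef]
    simp only [mem_sdiff, mem_univ, true_and]
    exact fun h => h.2 hb
  have hNW : ∀ x : V, x ∉ N → x ∈ W := by
    intro x hx
    rw [hWdef]
    simp only [mem_sdiff, mem_univ, true_and]
    exact fun h => hx h.1
  constructor
  · rintro ⟨ℓ, f, hf0, hfl, hmem, hstep⟩
    have hBsize : (2 * t + 1) * k ≤ B.card := by
      have hone : 1 ≤ (2 * t + 1) * k :=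
        Nat.one_le_iff_ne_zero.2 (Nat.mul_ne_zero (by omega) (by omega))
      set m := (2 * t + 1) * k with hm
      have h2 := choose_lb (t + 2) (m + t + 1) (by omega) (by omega)
      omega
    have hnb : ∀ x : V, x ≠ u1 → x ≠ u2 → (B.filter (fun y => G.Adj x y)).card ≤ t - 1 := by
      intro x hx1 hx2
      by_contra hcon
      push_neg at hcon
      have ht' : t ≤ (B.filter (fun y => G.Adj x y)).card := by omega
      obtain ⟨Y, hYsub, hYcard⟩ := Finset.exists_subset_card_eq ht'
      apply hforb
      refine ⟨{x, u1, u2}, Y, ?_, ?_, hYcard, ?_⟩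
      · rw [disjoint_left]
        intro a ha haY
        have haB : a ∈ B := (mem_filter.1 (hYsub haY)).1
        have haN : a ∈ N := hBN haB
        have hadja : G.Adj x a := (mem_filter.1 (hYsub haY)).2
        rcases mem_insert.1 ha with rfl | ha
        · exact G.irrefl hadja
        · rcases mem_insert.1 ha with rfl | ha
          · exact (hNu _ haN).1 rfl
          · exact (hNu a haN).2.1 (mem_singleton.1 ha)
      · exact Finset.card_eq_three.2 ⟨x, u1, u2, hx1, hx2, hne, rfl⟩
      · intro a ha y hy
        have hyB : y ∈ B := (mem_filter.1 (hYsub hy)).1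
        have hyN : y ∈ N := hBN hyB
        rcases mem_insert.1 ha with rfl | ha
        · exact (mem_filter.1 (hYsub hy)).2
        · rcases mem_insert.1 ha with rfl | ha
          · exact ((hadj y hyN).1).symm
          · have hau2 : a = u2 := mem_singleton.1 ha
            subst hau2
            exact ((hadj y hyN).2).symm
    have hne12 : ∀ J : Finset V, IsIndepFinset G J → ∀ w ∈ J, w ∈ N →
        ∀ x ∈ J, x ≠ u1 ∧ x ≠ u2 := by
      intro J hJ w hwJ hwN x hxJ
      constructor
      · rintro rfl
        exact hJ w hwJ x hxJ (hadj w hwN).1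
      · rintro rfl
        exact hJ w hwJ x hxJ (hadj w hwN).2
    have fresh : ∀ X Excl : Finset V, X.card ≤ k + 1 → Excl.card ≤ k + 1 →
        (∀ x ∈ X, x ≠ u1 ∧ x ≠ u2) →
        ∃ b ∈ B, b ∉ Excl ∧ ∀ x ∈ X, ¬ G.Adj x b := by
      intro X Excl hX hE h12
      set Bad := Excl ∪ X.biUnion (fun x => B.filter (fun y => G.Adj x y)) with hBad
      have h1 : (X.biUnion (fun x => B.filter (fun y => G.Adj x y))).card ≤ (k+1) * (t-1) := by
        refine le_trans Finset.card_biUnion_le ?_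
        calc ∑ x ∈ X, (B.filter (fun y => G.Adj x y)).card
            ≤ ∑ _x ∈ X, (t-1) := Finset.sum_le_sum (fun x hx => hnb x (h12 x hx).1 (h12 x hx).2)
          _ = X.card * (t-1) := by rw [Finset.sum_const, smul_eq_mul]
          _ ≤ (k+1) * (t-1) := Nat.mul_le_mul_right _ hX
      have h2 : Bad.card ≤ (k+1) + (k+1)*(t-1) :=
        le_trans (card_union_le _ _) (by omega)
      have h3 : (k+1) + (k+1)*(t-1) < (2*t+1)*k := by
        obtain ⟨t', rfl⟩ : ∃ t', t = t' + 1 := ⟨t - 1, by omega⟩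
        simp only [Nat.add_sub_cancel]
        nlinarith [hk, ht]
      have hlt : Bad.card < B.card := lt_of_le_of_lt h2 (lt_of_lt_of_le h3 hBsize)
      obtain ⟨b, hbB, hbBad⟩ : ∃ b ∈ B, b ∉ Bad := by
        by_contra hcon
        push_neg at hcon
        have hsub : B ⊆ Bad := hcon
        have := card_le_card hsub
        omega
      exact ⟨b, hbB, fun h => hbBad (mem_union_left _ h),
        fun x hx hadjxb => hbBad (mem_union_right _
          (mem_biUnion.2 ⟨x, hx, mem_filter.2 ⟨hbB, hadjxb⟩⟩))⟩
    have cleanup : ∀ n : ℕ, ∀ (A S : Finset V) (v : V),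
        (S.filter (fun s => G.Adj s v)).card ≤ n →
        S ⊆ B → Disjoint A S → A ⊆ W → IsIndepFinset G (A ∪ S) → (A ∪ S).card = k →
        (S.Nonempty → ∀ x ∈ A ∪ S, x ≠ u1 ∧ x ≠ u2) →
        (S.Nonempty → v ≠ u1 ∧ v ≠ u2) →
        ∃ S', S' ⊆ B ∧ S'.card = S.card ∧ Disjoint A S' ∧ IsIndepFinset G (A ∪ S') ∧
          (∀ s ∈ S', ¬ G.Adj s v) ∧
          Relation.ReflTransGen (TJStepRelW G k W) (A ∪ S) (A ∪ S') := by
      intro n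
      induction n with
      | zero =>
        intro A S v hc hSB hdisj hAW hind hcard h12 hv12
        refine ⟨S, hSB, rfl, hdisj, hind, ?_, Relation.ReflTransGen.refl⟩
        intro s hs hadj'
        have hmem' : s ∈ S.filter (fun s => G.Adj s v) := mem_filter.2 ⟨hs, hadj'⟩
        have := card_pos.2 ⟨s, hmem'⟩
        omega
      | succ n ih =>
        intro A S v hc hSB hdisj hAW hind hcard h12 hv12
        by_cases hcc : (S.filter (fun s => G.Adj s v)).Nonempty
        · obtain ⟨s', hs'f⟩ := hcc
          have hs'S : s' ∈ S := (mem_filter.1 hs'f).1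
          have hSne : S.Nonempty := ⟨s', hs'S⟩
          have h12' := h12 hSne
          have hv' := hv12 hSne
          have hs'J : s' ∈ A ∪ S := mem_union_right _ hs'S
          have hs'A : s' ∉ A := disjoint_right.1 hdisj hs'S
          obtain ⟨b, hbB, hbE, hbadj⟩ := fresh (insert v ((A ∪ S).erase s')) (insert v (A ∪ S))
            (by
              have hh1 := card_insert_le v ((A ∪ S).erase s')
              have hh2 := card_erase_le (s := A ∪ S) (a := s')
              omega)
            (by have := card_insert_le v (A ∪ S); omega)
            (by
              intro x hx
              rcases mem_insert.1 hx with rfl | hx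
              · exact hv'
              · exact h12' x (mem_of_mem_erase hx))
          have hbJ : b ∉ A ∪ S := fun h => hbE (mem_insert_of_mem h)
          have hbadj' : ∀ x ∈ (A ∪ S).erase s', ¬ G.Adj x b :=
            fun x hx => hbadj x (mem_insert_of_mem hx)
          have hbS : b ∉ S := fun h => hbJ (mem_union_right _ h)
          set S₂ := insert b (S.erase s') with hS₂def
          have hunion : insert b ((A ∪ S).erase s') = A ∪ S₂ := by
            rw [erase_union_distrib, erase_eq_of_notMem hs'A, ← union_insert]
          have hind₂ : IsIndepFinset G (A ∪ S₂) := by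
            rw [← hunion]; exact indep_insert_erase hind hbadj'
          have hcard₂ : (A ∪ S₂).card = k := by
            rw [← hunion, card_insert_erase hs'J hbJ]; exact hcard
          have hstep1 : TJStepRelW G k W (A ∪ S) (A ∪ S₂) := by
            rw [← hunion]
            refine ⟨tjstep_insert_erase hs'J hbJ, indep_insert_erase hind hbadj',
              by rw [card_insert_erase hs'J hbJ]; exact hcard, ?_⟩
            intro x hx
            rcases mem_insert.1 hx with rfl | hx
            · exact hBW x hbB
            · rcases mem_union.1 (mem_of_mem_erase hx) with h | h
              · exact hAW h
              · exact hBW x (hSB h)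
          have hsub : S₂.filter (fun s => G.Adj s v) ⊆ (S.filter (fun s => G.Adj s v)).erase s' := by
            intro x hx
            obtain ⟨hx1, hx2⟩ := mem_filter.1 hx
            rcases mem_insert.1 hx1 with rfl | hx1
            · exact absurd hx2 (fun h => hbadj v (mem_insert_self _ _) h.symm)
            · exact mem_erase.2 ⟨(mem_erase.1 hx1).1, mem_filter.2 ⟨(mem_erase.1 hx1).2, hx2⟩⟩
          have hccard : (S₂.filter (fun s => G.Adj s v)).card ≤ n := by
            have hh1 := card_le_card hsub
            have hh2 : ((S.filter (fun s => G.Adj s v)).erase s').card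
                = (S.filter (fun s => G.Adj s v)).card - 1 := card_erase_of_mem hs'f
            have hh3 := card_pos.2 ⟨s', hs'f⟩
            omega
          obtain ⟨S', hS'B, hS'c, hS'd, hS'i, hS'a, hS'chain⟩ := ih A S₂ v hccard
            (by
              intro x hx
              rcases mem_insert.1 hx with rfl | hx
              · exact hbB
              · exact hSB (mem_of_mem_erase hx))
            (disjoint_right.2 (fun x hx => by
              rcases mem_insert.1 hx with rfl | hx
              · exact fun h => hbJ (mem_union_left _ h)
              · exact disjoint_right.1 hdisj (mem_of_mem_erase hx)))
            hAW hind₂ hcard₂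
            (by
              intro _ x hx
              rcases mem_union.1 hx with hx | hx
              · exact h12' x (mem_union_left _ hx)
              · rcases mem_insert.1 hx with rfl | hx
                · exact ⟨(hNu x (hBN hbB)).1, (hNu x (hBN hbB)).2.1⟩
                · exact h12' x (mem_union_right _ (mem_of_mem_erase hx)))
            (fun _ => hv')
          refine ⟨S', hS'B, ?_, hS'd, hS'i, hS'a,
            Relation.ReflTransGen.head hstep1 hS'chain⟩
          rw [hS'c, hS₂def, card_insert_erase hs'S hbS]
        · refine ⟨S, hSB, rfl, hdisj, hind, ?_, Relation.ReflTransGen.refl⟩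
          intro s hs hadj'
          exact hcc ⟨s, mem_filter.2 ⟨hs, hadj'⟩⟩
    have hI0N : I0 ∩ N = ∅ :=
      Finset.eq_empty_iff_forall_notMem.2
        (fun x hx => (hNu x (mem_inter.1 hx).2).2.2.1 (mem_inter.1 hx).1)
    have hIrN : Ir ∩ N = ∅ :=
      Finset.eq_empty_iff_forall_notMem.2
        (fun x hx => (hNu x (mem_inter.1 hx).2).2.2.2 (mem_inter.1 hx).1)
    have main : ∀ i, i ≤ ℓ → ∃ S : Finset V, S ⊆ B ∧ S.card = (f i ∩ N).card ∧
        IsIndepFinset G (f i \ N ∪ S) ∧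
        Relation.ReflTransGen (TJStepRelW G k W) I0 (f i \ N ∪ S) := by
      intro i
      induction i with
      | zero =>
        intro _
        have h0N : f 0 ∩ N = ∅ := by rw [hf0]; exact hI0N
        have h0d : f 0 \ N = I0 := by
          rw [hf0]
          ext x
          simp only [mem_sdiff]
          exact ⟨fun h => h.1, fun h => ⟨h, fun hN => (hNu x hN).2.2.1 h⟩⟩
        refine ⟨∅, empty_subset _, by simp [h0N], ?_, ?_⟩
        · rw [union_empty, h0d]; exact hI0
        · rw [union_empty, h0d]
      | succ i ih =>
        intro hi1
        have hiℓ : i < ℓ := hi1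
        obtain ⟨S, hSB, hScard, hSind, hSchain⟩ := ih (Nat.le_of_lt hiℓ)
        obtain ⟨u, v, huI, hvI, hvJ, huJ, hJeq⟩ := step_decomp (hstep i hiℓ)
        obtain ⟨hIind, hIcard⟩ := hmem i (Nat.le_of_lt hiℓ)
        obtain ⟨hJind, hJcard⟩ := hmem (i+1) hi1
        set A := f i \ N with hAdef
        have hAN : ∀ x ∈ A, x ∉ N := fun x hx => (mem_sdiff.1 hx).2
        have hAI : A ⊆ f i := sdiff_subset
        have hSN : ∀ x ∈ S, x ∈ N := fun x hx => hBN (hSB hx)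
        have hdisjAS : Disjoint A S :=
          disjoint_left.2 (fun x hx hxS => hAN x hx (hSN x hxS))
        have hAW : A ⊆ W := fun x hx => hNW x (hAN x hx)
        have hcardAS : (A ∪ S).card = k := by
          rw [card_union_of_disjoint hdisjAS, hScard, hAdef, card_sdiff_add_card_inter, hIcard]
        by_cases huN : u ∈ N
        · by_cases hvN : v ∈ N
          · -- case d : u ∈ N, v ∈ N
            have huSn : u ∈ f i ∩ N := mem_inter.2 ⟨huI, huN⟩
            have h1 : f (i+1) ∩ N = insert v ((f i ∩ N).erase u) := by
              rw [hJeq]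
              ext x
              simp only [mem_insert, mem_erase, mem_inter]
              constructor
              · rintro ⟨rfl | ⟨hxu, hxI⟩, hxN⟩
                · exact Or.inl rfl
                · exact Or.inr ⟨hxu, hxI, hxN⟩
              · rintro (rfl | ⟨hxu, hxI, hxN⟩)
                · exact ⟨Or.inl rfl, hvN⟩
                · exact ⟨Or.inr ⟨hxu, hxI⟩, hxN⟩
            have h2 : f (i+1) \ N = A := by
              rw [hJeq, hAdef]
              ext x
              simp only [mem_insert, mem_erase, mem_sdiff]
              constructor
              · rintro ⟨rfl | ⟨hxu, hxI⟩, hxN⟩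
                · exact absurd hvN hxN
                · exact ⟨hxI, hxN⟩
              · rintro ⟨hxI, hxN⟩
                exact ⟨Or.inr ⟨fun h => hxN (h ▸ huN), hxI⟩, hxN⟩
            have hSne : S.Nonempty := card_pos.1 (by rw [hScard]; exact card_pos.2 ⟨u, huSn⟩)
            obtain ⟨s, hsS⟩ := hSne
            have hsJ : s ∈ A ∪ S := mem_union_right _ hsS
            have h12 : ∀ x ∈ A ∪ S, x ≠ u1 ∧ x ≠ u2 :=
              hne12 (A ∪ S) hSind s hsJ (hSN s hsS)
            obtain ⟨b, hbB, hbE, hbadj⟩ := fresh ((A ∪ S).erase s) (A ∪ S)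
              (by have := card_erase_le (s := A ∪ S) (a := s); omega)
              (by omega)
              (fun x hx => h12 x (mem_of_mem_erase hx))
            have hbS : b ∉ S := fun h => hbE (mem_union_right _ h)
            have hsA : s ∉ A := disjoint_right.1 hdisjAS hsS
            set S' := insert b (S.erase s) with hS'def
            have hunion : insert b ((A ∪ S).erase s) = A ∪ S' := by
              rw [erase_union_distrib, erase_eq_of_notMem hsA, ← union_insert]
            have hstep1 : TJStepRelW G k W (A ∪ S) (A ∪ S') := by
              rw [← hunion]
              refine ⟨tjstep_insert_erase hsJ hbE, indep_insert_erase hSind hbadj,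
                by rw [card_insert_erase hsJ hbE]; exact hcardAS, ?_⟩
              intro x hx
              rcases mem_insert.1 hx with rfl | hx
              · exact hBW x hbB
              · rcases mem_union.1 (mem_of_mem_erase hx) with h | h
                · exact hAW h
                · exact hBW x (hSB h)
            refine ⟨S', ?_, ?_, ?_, ?_⟩
            · intro x hx
              rcases mem_insert.1 hx with rfl | hx
              · exact hbB
              · exact hSB (mem_of_mem_erase hx)
            · rw [hS'def, card_insert_erase hsS hbS, hScard, h1,
                card_insert_erase huSn (fun h => hvI (mem_inter.1 h).1)]
            · rw [h2, ← hunion]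
              exact indep_insert_erase hSind hbadj
            · rw [h2]
              exact hSchain.tail hstep1
          · -- case c : u ∈ N, v ∉ N
            have huSn : u ∈ f i ∩ N := mem_inter.2 ⟨huI, huN⟩
            have h1 : f (i+1) ∩ N = (f i ∩ N).erase u := by
              rw [hJeq]
              ext x
              simp only [mem_insert, mem_erase, mem_inter]
              constructor
              · rintro ⟨rfl | ⟨hxu, hxI⟩, hxN⟩
                · exact absurd hxN hvN
                · exact ⟨hxu, hxI, hxN⟩
              · rintro ⟨hxu, hxI, hxN⟩
                exact ⟨Or.inr ⟨hxu, hxI⟩, hxN⟩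
            have h2 : f (i+1) \ N = insert v A := by
              rw [hJeq, hAdef]
              ext x
              simp only [mem_insert, mem_erase, mem_sdiff]
              constructor
              · rintro ⟨rfl | ⟨hxu, hxI⟩, hxN⟩
                · exact Or.inl rfl
                · exact Or.inr ⟨hxI, hxN⟩
              · rintro (rfl | ⟨hxI, hxN⟩)
                · exact ⟨Or.inl rfl, hvN⟩
                · exact ⟨Or.inr ⟨fun h => hxN (h ▸ huN), hxI⟩, hxN⟩
            have hSne : S.Nonempty := card_pos.1 (by rw [hScard]; exact card_pos.2 ⟨u, huSn⟩)
            obtain ⟨s, hsS⟩ := hSne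
            have hsN : s ∈ N := hSN s hsS
            have hsA : s ∉ A := disjoint_right.1 hdisjAS hsS
            have hsetu : insert s A ∪ S.erase s = A ∪ S := by
              rw [insert_union, ← union_insert, insert_erase hsS]
            have hdcl : Disjoint (insert s A) (S.erase s) := by
              rw [disjoint_right]
              intro x hx hx2
              rcases mem_insert.1 hx2 with rfl | hx2
              · exact (mem_erase.1 hx).1 rfl
              · exact disjoint_right.1 hdisjAS (mem_of_mem_erase hx) hx2
            obtain ⟨S₁, hS₁B, hS₁c, hS₁d, hS₁i, hS₁a, hS₁chain⟩ :=
              cleanup ((S.erase s).filter (fun x => G.Adj x v)).card (insert s A) (S.erase s) v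
                le_rfl
                (fun x hx => hSB (mem_of_mem_erase hx))
                hdcl
                (by
                  intro x hx
                  rcases mem_insert.1 hx with rfl | hx
                  · exact hBW x (hSB hsS)
                  · exact hAW hx)
                (by rw [hsetu]; exact hSind)
                (by rw [hsetu]; exact hcardAS)
                (by
                  intro _ x hx
                  rw [hsetu] at hx
                  exact hne12 (A ∪ S) hSind s (mem_union_right _ hsS) hsN x hx)
                (by
                  intro hEne
                  have hpos : 0 < (f (i+1) ∩ N).card := by
                    have hh1 : 0 < (S.erase s).card := card_pos.2 hEne
                    have hh2 : (S.erase s).card = S.card - 1 := card_erase_of_mem hsS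
                    rw [h1, card_erase_of_mem huSn]
                    omega
                  obtain ⟨w, hw⟩ := card_pos.1 hpos
                  exact hne12 (f (i+1)) hJind w (mem_inter.1 hw).1 (mem_inter.1 hw).2 v hvJ)
            rw [hsetu] at hS₁chain
            have hsJ₁ : s ∈ insert s A ∪ S₁ := mem_union_left _ (mem_insert_self _ _)
            have hvJ₁ : v ∉ insert s A ∪ S₁ := by
              intro h
              rcases mem_union.1 h with h | h
              · rcases mem_insert.1 h with rfl | h
                · exact hvN hsN
                · exact hvI (hAI h)
              · exact hvN (hBN (hS₁B h))
            have hsS₁ : s ∉ S₁ := disjoint_left.1 hS₁d (mem_insert_self s A)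
            have herase : (insert s A ∪ S₁).erase s = A ∪ S₁ := by
              rw [erase_union_distrib, erase_insert hsA, erase_eq_of_notMem hsS₁]
            have hindJ' : IsIndepFinset G (insert v ((insert s A ∪ S₁).erase s)) := by
              apply indep_insert_erase hS₁i
              intro x hx
              rw [herase] at hx
              rcases mem_union.1 hx with hx | hx
              · have hxJ : x ∈ f (i+1) := by
                  rw [hJeq]
                  exact mem_insert_of_mem (mem_erase.2 ⟨fun h => hAN x hx (h ▸ huN), hAI hx⟩)
                exact fun h => hJind x hxJ v hvJ h
              · exact hS₁a x hx
            have hcard₁ : (insert s A ∪ S₁).card = k := by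
              rw [card_union_of_disjoint hS₁d, hS₁c, ← card_union_of_disjoint hdcl, hsetu]
              exact hcardAS
            have hstep2 : TJStepRelW G k W (insert s A ∪ S₁)
                (insert v ((insert s A ∪ S₁).erase s)) := by
              refine ⟨tjstep_insert_erase hsJ₁ hvJ₁, hindJ',
                by rw [card_insert_erase hsJ₁ hvJ₁]; exact hcard₁, ?_⟩
              intro x hx
              rcases mem_insert.1 hx with rfl | hx
              · exact hNW x hvN
              · rw [herase] at hx
                rcases mem_union.1 hx with h | h
                · exact hAW h
                · exact hBW x (hS₁B h)
            have hJ'eq : insert v ((insert s A ∪ S₁).erase s) = f (i+1) \ N ∪ S₁ := by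
              rw [herase, h2, insert_union]
            refine ⟨S₁, hS₁B, ?_, ?_, ?_⟩
            · rw [hS₁c, card_erase_of_mem hsS, hScard, h1, card_erase_of_mem huSn]
            · rw [← hJ'eq]; exact hindJ'
            · rw [← hJ'eq]
              exact (hSchain.trans hS₁chain).tail hstep2
        · by_cases hvN : v ∈ N
          · -- case b : u ∉ N, v ∈ N
            have huA : u ∈ A := mem_sdiff.2 ⟨huI, huN⟩
            have h1 : f (i+1) ∩ N = insert v (f i ∩ N) := by
              rw [hJeq]
              ext x
              simp only [mem_insert, mem_erase, mem_inter]
              constructor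
              · rintro ⟨rfl | ⟨hxu, hxI⟩, hxN⟩
                · exact Or.inl rfl
                · exact Or.inr ⟨hxI, hxN⟩
              · rintro (rfl | ⟨hxI, hxN⟩)
                · exact ⟨Or.inl rfl, hvN⟩
                · exact ⟨Or.inr ⟨fun h => huN (h ▸ hxN), hxI⟩, hxN⟩
            have h2 : f (i+1) \ N = A.erase u := by
              rw [hJeq, hAdef]
              ext x
              simp only [mem_insert, mem_erase, mem_sdiff]
              constructor
              · rintro ⟨rfl | ⟨hxu, hxI⟩, hxN⟩
                · exact absurd hvN hxN
                · exact ⟨hxu, hxI, hxN⟩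
              · rintro ⟨hxu, hxI, hxN⟩
                exact ⟨Or.inr ⟨hxu, hxI⟩, hxN⟩
            have huAS : u ∈ A ∪ S := mem_union_left _ huA
            have h12 : ∀ x ∈ (A ∪ S).erase u, x ≠ u1 ∧ x ≠ u2 := by
              intro x hx
              obtain ⟨hxu, hxAS⟩ := mem_erase.1 hx
              rcases mem_union.1 hxAS with hxA | hxS
              · have hxJ : x ∈ f (i+1) := by
                  rw [hJeq]
                  exact mem_insert_of_mem (mem_erase.2 ⟨hxu, hAI hxA⟩)
                exact hne12 (f (i+1)) hJind v hvJ hvN x hxJ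
              · exact ⟨(hNu x (hSN x hxS)).1, (hNu x (hSN x hxS)).2.1⟩
            obtain ⟨b, hbB, hbE, hbadj⟩ := fresh ((A ∪ S).erase u) (A ∪ S)
              (by have := card_erase_le (s := A ∪ S) (a := u); omega)
              (by omega) h12
            have hbS : b ∉ S := fun h => hbE (mem_union_right _ h)
            have huS : u ∉ S := fun h => huN (hSN u h)
            have hunion : insert b ((A ∪ S).erase u) = A.erase u ∪ insert b S := by
              rw [erase_union_distrib, erase_eq_of_notMem huS, ← union_insert]
            have hstep1 : TJStepRelW G k W (A ∪ S) (A.erase u ∪ insert b S) := by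
              rw [← hunion]
              refine ⟨tjstep_insert_erase huAS hbE, indep_insert_erase hSind hbadj,
                by rw [card_insert_erase huAS hbE]; exact hcardAS, ?_⟩
              intro x hx
              rcases mem_insert.1 hx with rfl | hx
              · exact hBW x hbB
              · rcases mem_union.1 (mem_of_mem_erase hx) with h | h
                · exact hAW h
                · exact hBW x (hSB h)
            refine ⟨insert b S, ?_, ?_, ?_, ?_⟩
            · intro x hx
              rcases mem_insert.1 hx with rfl | hx
              · exact hbB
              · exact hSB hx
            · rw [card_insert_of_notMem hbS, h1,
                card_insert_of_notMem (fun h => hvI (mem_inter.1 h).1), hScard]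
            · rw [h2, ← hunion]
              exact indep_insert_erase hSind hbadj
            · rw [h2]
              exact hSchain.tail hstep1
          · -- case a : u ∉ N, v ∉ N
            have huA : u ∈ A := mem_sdiff.2 ⟨huI, huN⟩
            have h1 : f (i+1) ∩ N = f i ∩ N := by
              rw [hJeq]
              ext x
              simp only [mem_insert, mem_erase, mem_inter]
              constructor
              · rintro ⟨rfl | ⟨hxu, hxI⟩, hxN⟩
                · exact absurd hxN hvN
                · exact ⟨hxI, hxN⟩
              · rintro ⟨hxI, hxN⟩
                exact ⟨Or.inr ⟨fun h => huN (h ▸ hxN), hxI⟩, hxN⟩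
            have h2 : f (i+1) \ N = insert v (A.erase u) := by
              rw [hJeq, hAdef]
              ext x
              simp only [mem_insert, mem_erase, mem_sdiff]
              constructor
              · rintro ⟨rfl | ⟨hxu, hxI⟩, hxN⟩
                · exact Or.inl rfl
                · exact Or.inr ⟨hxu, hxI, hxN⟩
              · rintro (rfl | ⟨hxu, hxI, hxN⟩)
                · exact ⟨Or.inl rfl, hvN⟩
                · exact ⟨Or.inr ⟨hxu, hxI⟩, hxN⟩
            obtain ⟨S₁, hS₁B, hS₁c, hS₁d, hS₁i, hS₁a, hS₁chain⟩ :=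
              cleanup (S.filter (fun x => G.Adj x v)).card A S v le_rfl hSB hdisjAS hAW
                hSind hcardAS
                (by
                  intro hSne x hx
                  obtain ⟨s0, hs0⟩ := hSne
                  exact hne12 (A ∪ S) hSind s0 (mem_union_right _ hs0) (hSN s0 hs0) x hx)
                (by
                  intro hSne
                  have hpos : 0 < (f i ∩ N).card := by
                    rw [← hScard]; exact card_pos.2 hSne
                  obtain ⟨w, hw⟩ := card_pos.1 hpos
                  have hwN : w ∈ N := (mem_inter.1 hw).2
                  have hwJ : w ∈ f (i+1) := by
                    rw [hJeq]
                    exact mem_insert_of_mem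
                      (mem_erase.2 ⟨fun h => huN (h ▸ hwN), (mem_inter.1 hw).1⟩)
                  exact hne12 (f (i+1)) hJind w hwJ hwN v hvJ)
            have huJ₁ : u ∈ A ∪ S₁ := mem_union_left _ huA
            have hvJ₁ : v ∉ A ∪ S₁ := by
              intro h
              rcases mem_union.1 h with h | h
              · exact hvI (hAI h)
              · exact hvN (hBN (hS₁B h))
            have herase : (A ∪ S₁).erase u = A.erase u ∪ S₁ := by
              rw [erase_union_distrib, erase_eq_of_notMem (fun h => huN (hBN (hS₁B h)))]
            have hindJ' : IsIndepFinset G (insert v ((A ∪ S₁).erase u)) := by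
              apply indep_insert_erase hS₁i
              intro x hx
              rw [herase] at hx
              rcases mem_union.1 hx with hx | hx
              · have hxJ : x ∈ f (i+1) := by
                  rw [hJeq]
                  exact mem_insert_of_mem
                    (mem_erase.2 ⟨(mem_erase.1 hx).1, hAI (mem_of_mem_erase hx)⟩)
                exact fun h => hJind x hxJ v hvJ h
              · exact hS₁a x hx
            have hcard₁ : (A ∪ S₁).card = k := by
              rw [card_union_of_disjoint hS₁d, hS₁c, ← card_union_of_disjoint hdisjAS]
              exact hcardAS
            have hstep2 : TJStepRelW G k W (A ∪ S₁) (insert v ((A ∪ S₁).erase u)) := by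
              refine ⟨tjstep_insert_erase huJ₁ hvJ₁, hindJ',
                by rw [card_insert_erase huJ₁ hvJ₁]; exact hcard₁, ?_⟩
              intro x hx
              rcases mem_insert.1 hx with rfl | hx
              · exact hNW x hvN
              · rw [herase] at hx
                rcases mem_union.1 hx with h | h
                · exact hAW (mem_of_mem_erase h)
                · exact hBW x (hS₁B h)
            have hJ'eq : insert v ((A ∪ S₁).erase u) = f (i+1) \ N ∪ S₁ := by
              rw [herase, h2, insert_union]
            refine ⟨S₁, hS₁B, ?_, ?_, ?_⟩
            · rw [hS₁c, hScard, h1]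
            · rw [← hJ'eq]; exact hindJ'
            · rw [← hJ'eq]
              exact (hSchain.trans hS₁chain).tail hstep2
    obtain ⟨S, hSB, hScard, hSind, hSchain⟩ := main ℓ le_rfl
    have hS0 : S = ∅ := card_eq_zero.1 (by rw [hScard, hfl, hIrN, card_empty])
    have hfin : f ℓ \ N ∪ S = Ir := by
      rw [hS0, union_empty, hfl]
      ext x
      simp only [mem_sdiff]
      exact ⟨fun h => h.1, fun h => ⟨h, fun hN => (hNu x hN).2.2.2 h⟩⟩
    have hI0W : I0 ⊆ W := by
      intro x hx
      by_cases hxN : x ∈ N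
      · exact absurd hx (hNu x hxN).2.2.1
      · exact hNW x hxN
    rw [hfin] at hSchain
    exact chain_to_within hI0 hI0k hI0W hSchain
  · rintro ⟨ℓ, f, hseq, _⟩
    exact ⟨ℓ, f, hseq⟩
end

section
/- For every integer t ≥ 3 there exists a function f : ℕ → ℕ with the following property: for every finite simple graph G = (V, E) that is K_{3,t}-forbidden and every two independent sets I_0 and I_r of G with |I_0| = |I_r| = k, there exists a vertex set V' with I_0 ∪ I_r ⊆ V' ⊆ V and |V'| ≤ f(k) such that there is a token-jumping reconfiguration sequence from I_0 to I_r in G if and only if there is one in the subgraph of G induced on V'. -/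
/-!
Reachability inside a vertex set `A` is witnessed inside a subset of `A` whose size is bounded in
terms of `k` alone, by recursion on the number `k` of tokens. A vertex occupied throughout the
sequence (or a stretch of it) is removed together with its neighbours, leaving `k - 1` tokens.
Otherwise, unless `A` is small, it contains a *buffer*: an independent set `C` with
`k * (d + 1) < #C`. An independent `k`-set whose vertices have at most `d` neighbours in `C` can be
flooded into `C` one token at a time, and inside `C` tokens move freely; so the sequence is kept
only up to its first and from its last member of this kind, with a detour through `C` in between.
Buffers are found greedily in the common neighbourhood of a pair `u, v` with many common
neighbours (where `K_{3,t}`-freeness bounds the degree of every other vertex by `t`), in the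
neighbourhood of a vertex of large degree, or in `A` itself when all degrees are small. If every
member of the sequence meets the heavy pair `{u, v}`, the sequence avoids its common
neighbourhood, which is removed from `A` while the pair is recorded; since no vertex is occupied
throughout, at most `k²` pairs are met by every member, which bounds the depth of this second
recursion.
-/

open Finset

variable {V : Type*} {G : SimpleGraph V} {k ℓ : ℕ} {f : ℕ → Finset V} {I J K : Finset V}

theorem IsIndepFinset.mono_s7 (hI : IsIndepFinset G I) (hJI : J ⊆ I) : IsIndepFinset G J :=
  fun u hu v hv => hI u (hJI hu) v (hJI hv)

variable [DecidableEq V]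

theorem IsIndepFinset.insert {x : V} (hI : IsIndepFinset G I) (hx : ∀ w ∈ I, ¬ G.Adj x w) :
    IsIndepFinset G (insert x I) := by
  simp only [IsIndepFinset, mem_insert, forall_eq_or_imp, SimpleGraph.irrefl, not_false_eq_true,
    true_and]
  exact ⟨hx, fun u hu => ⟨fun h => hx u hu h.symm, hI u hu⟩⟩

theorem tjStep_iff : TJStep I J ↔ ∃ u v, I \ J = {u} ∧ J \ I = {v} := by
  refine ⟨fun ⟨u, v, _, _, hu, hv⟩ => ⟨u, v, hu, hv⟩, fun ⟨u, v, hu, hv⟩ => ?_⟩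
  have hu' : u ∈ I \ J := hu ▸ mem_singleton_self u
  have hv' : v ∈ J \ I := hv ▸ mem_singleton_self v
  exact ⟨u, v, (mem_sdiff.1 hu').1, (mem_sdiff.1 hv').2, hu, hv⟩

theorem TJStep.symm (h : TJStep I J) : TJStep J I := by
  obtain ⟨u, v, hu, hv⟩ := tjStep_iff.1 h
  exact tjStep_iff.2 ⟨v, u, hv, hu⟩

theorem TJStep.erase {x : V} (h : TJStep I J) (hxI : x ∈ I) (hxJ : x ∈ J) :
    TJStep (I.erase x) (J.erase x) := by
  have hsdiff : ∀ {P Q : Finset V}, x ∈ P → Q.erase x \ P.erase x = Q \ P := fun hP => by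
    ext z; by_cases hz : z = x <;> simp_all
  obtain ⟨u, v, hu, hv⟩ := tjStep_iff.1 h
  exact tjStep_iff.2 ⟨u, v, by rw [hsdiff hxJ, hu], by rw [hsdiff hxI, hv]⟩

theorem TJStep.insert {x : V} (h : TJStep I J) (hxI : x ∉ I) (hxJ : x ∉ J) :
    TJStep (insert x I) (insert x J) := by
  obtain ⟨u, v, hu, hv⟩ := tjStep_iff.1 h
  exact tjStep_iff.2 ⟨u, v, by rw [insert_sdiff_insert, sdiff_insert_of_notMem hxI, hu],
    by rw [insert_sdiff_insert, sdiff_insert_of_notMem hxJ, hv]⟩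

theorem tjStep_insert_erase {y c : V} (hy : y ∈ J) (hc : c ∉ J) :
    TJStep J (insert c (J.erase y)) := by
  refine tjStep_iff.2 ⟨y, c, ?_, ?_⟩ <;> ext z <;> by_cases hzy : z = y <;> by_cases hzc : z = c <;>
    simp_all

theorem card_insert_erase_sdiff_lt {C : Finset V} {y c : V} (hy : y ∈ J) (hyC : y ∉ C)
    (hc : c ∈ C) : #(insert c (J.erase y) \ C) < #(J \ C) := by
  have hyc : y ≠ c := by rintro rfl; exact hyC hc
  refine card_lt_card ((ssubset_iff_of_subset ?_).2 ⟨y, mem_sdiff.2 ⟨hy, hyC⟩, by simp [hyc]⟩)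
  intro z
  simp only [mem_sdiff, mem_insert, mem_erase]
  rintro ⟨rfl | ⟨-, hz⟩, hzC⟩
  exacts [absurd hc hzC, ⟨hz, hzC⟩]

theorem card_union_union_le {R₁ R₂ C : Finset V} (h₁ : #R₁ = k) (h₂ : #R₂ = k) :
    #(R₁ ∪ R₂ ∪ C) ≤ 2 * k + #C := by
  have := card_union_le (R₁ ∪ R₂) C
  have := card_union_le R₁ R₂
  omega

namespace TJSeq

theorem indep (h : TJSeq G k I J ℓ f) {i : ℕ} (hi : i ≤ ℓ) : IsIndepFinset G (f i) :=
  (h.2.2.1 i hi).1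

theorem card (h : TJSeq G k I J ℓ f) {i : ℕ} (hi : i ≤ ℓ) : #(f i) = k :=
  (h.2.2.1 i hi).2

theorem step (h : TJSeq G k I J ℓ f) {i : ℕ} (hi : i < ℓ) : TJStep (f i) (f (i + 1)) :=
  h.2.2.2 i hi

theorem take (h : TJSeq G k I J ℓ f) {j : ℕ} (hj : j ≤ ℓ) : TJSeq G k I (f j) j f :=
  ⟨h.1, rfl, fun i hi => h.2.2.1 i (hi.trans hj), fun i hi => h.2.2.2 i (by omega)⟩

theorem reverse (h : TJSeq G k I J ℓ f) : TJSeq G k J I ℓ (fun i => f (ℓ - i)) := by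
  obtain ⟨h0, hℓ, hf, hstep⟩ := h
  refine ⟨by simpa using hℓ, by simpa using h0, fun i _ => hf _ (by omega), fun i hi => ?_⟩
  have := (hstep (ℓ - (i + 1)) (by omega)).symm
  rwa [show ℓ - (i + 1) + 1 = ℓ - i by omega] at this

theorem erase {x : V} (h : TJSeq G k I J ℓ f) (hx : ∀ i ≤ ℓ, x ∈ f i) :
    TJSeq G (k - 1) (I.erase x) (J.erase x) ℓ (fun i => (f i).erase x) := by
  obtain ⟨h0, hℓ, hf, hstep⟩ := h
  refine ⟨by simp only [h0], by simp only [hℓ],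
    fun i hi => ⟨(hf i hi).1.mono_s7 (erase_subset _ _), ?_⟩,
    fun i hi => (hstep i hi).erase (hx i hi.le) (hx (i + 1) hi)⟩
  rw [card_erase_of_mem (hx i hi), (hf i hi).2]

end TJSeq

namespace TJReachableWithin

variable {W W' : Finset V}

theorem refl (hI : IsIndepFinset G I) (hk : #I = k) : TJReachableWithin G k I I I :=
  ⟨0, fun _ => I, ⟨rfl, rfl, fun _ _ => ⟨hI, hk⟩, fun _ hi => absurd hi (Nat.not_lt_zero _)⟩,
    fun _ _ => subset_rfl⟩

theorem mono_s7 (h : TJReachableWithin G k I J W) (hW : W ⊆ W') : TJReachableWithin G k I J W' :=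
  let ⟨ℓ, f, hs, hw⟩ := h
  ⟨ℓ, f, hs, fun i hi => (hw i hi).trans hW⟩

theorem left_subset (h : TJReachableWithin G k I J W) : I ⊆ W :=
  let ⟨_, _, hs, hw⟩ := h
  hs.1 ▸ hw 0 (Nat.zero_le _)

theorem indep_left (h : TJReachableWithin G k I J W) : IsIndepFinset G I :=
  let ⟨_, _, hs, _⟩ := h
  hs.1 ▸ hs.indep (Nat.zero_le _)

theorem card_left (h : TJReachableWithin G k I J W) : #I = k :=
  let ⟨_, _, hs, _⟩ := h
  hs.1 ▸ hs.card (Nat.zero_le _)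

theorem symm (h : TJReachableWithin G k I J W) : TJReachableWithin G k J I W :=
  let ⟨ℓ, f, hs, hw⟩ := h
  ⟨ℓ, fun i => f (ℓ - i), hs.reverse, fun _ _ => hw _ (Nat.sub_le _ _)⟩

theorem subset_right (h : TJReachableWithin G k I J W) : J ⊆ W := h.symm.left_subset

theorem card_right (h : TJReachableWithin G k I J W) : #J = k := h.symm.card_left

theorem trans (h₁ : TJReachableWithin G k I J W) (h₂ : TJReachableWithin G k J K W') :
    TJReachableWithin G k I K (W ∪ W') := by
  obtain ⟨ℓ₁, f₁, ⟨h₁0, h₁ℓ, hf₁, hstep₁⟩, hw₁⟩ := h₁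
  obtain ⟨ℓ₂, f₂, ⟨h₂0, h₂ℓ, hf₂, hstep₂⟩, hw₂⟩ := h₂
  set g := fun i => if i < ℓ₁ then f₁ i else f₂ (i - ℓ₁)
  have hg₁ : ∀ i ≤ ℓ₁, g i = f₁ i := fun i hi => by
    rcases hi.lt_or_eq with hi | rfl
    · simp [g, hi]
    · simp [g, h₂0, h₁ℓ]
  have hg₂ : ∀ j, g (ℓ₁ + j) = f₂ j := fun j => by simp [g]
  have hcases : ∀ i, i ≤ ℓ₁ ∨ ∃ j, 0 < j ∧ i = ℓ₁ + j := fun i =>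
    (le_or_gt i ℓ₁).imp_right fun hi => ⟨i - ℓ₁, by omega, by omega⟩
  refine ⟨ℓ₁ + ℓ₂, g, ⟨by rw [hg₁ 0 (Nat.zero_le _), h₁0], by rw [hg₂, h₂ℓ], fun i hi => ?_,
    fun i hi => ?_⟩, fun i hi => ?_⟩
  · rcases hcases i with hi' | ⟨j, -, rfl⟩
    · rw [hg₁ i hi']; exact hf₁ i hi'
    · rw [hg₂]; exact hf₂ j (by omega)
  · rcases hcases (i + 1) with hi' | ⟨j, hj, hij⟩
    · rw [hg₁ i (by omega), hg₁ (i + 1) hi']; exact hstep₁ i hi'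
    · obtain ⟨j, rfl⟩ := Nat.exists_eq_add_one.2 hj
      rw [show i = ℓ₁ + j by omega, hg₂, add_assoc, hg₂]; exact hstep₂ j (by omega)
  · rcases hcases i with hi' | ⟨j, -, rfl⟩
    · rw [hg₁ i hi']; exact (hw₁ i hi').trans subset_union_left
    · rw [hg₂]; exact (hw₂ j (by omega)).trans subset_union_right

theorem of_tjStep (h : TJStep I J) (hI : IsIndepFinset G I) (hIk : #I = k)
    (hJ : IsIndepFinset G J) (hJk : #J = k) : TJReachableWithin G k I J (I ∪ J) := by
  refine ⟨1, fun i => if i = 0 then I else J, ⟨rfl, rfl, fun i _ => ?_, fun i hi => ?_⟩,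
    fun i _ => ?_⟩
  · dsimp only
    split_ifs <;> simp [*]
  · obtain rfl : i = 0 := by omega
    simpa using h
  · dsimp only
    split_ifs
    exacts [subset_union_left, subset_union_right]

theorem of_swap {y c : V} (hy : y ∈ J) (hc : c ∉ J) (hJ : IsIndepFinset G J) (hJk : #J = k)
    (hJ' : IsIndepFinset G (insert c (J.erase y))) :
    TJReachableWithin G k J (insert c (J.erase y)) (insert c J) := by
  have hk : #(insert c (J.erase y)) = k := by
    rw [card_insert_of_notMem (fun h => hc (mem_of_mem_erase h)), card_erase_add_one hy, hJk]
  refine (of_tjStep (tjStep_insert_erase hy hc) hJ hJk hJ' hk).mono_s7 ?_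
  exact union_subset (subset_insert _ _) (insert_subset_insert _ (erase_subset _ _))

theorem insert_of_forall_not_adj {x : V} (h : TJReachableWithin G k I J W) (hxW : x ∉ W)
    (hx : ∀ w ∈ W, ¬ G.Adj x w) :
    TJReachableWithin G (k + 1) (insert x I) (insert x J) (insert x W) := by
  obtain ⟨ℓ, f, ⟨h0, hℓ, hf, hstep⟩, hw⟩ := h
  have hxf : ∀ i ≤ ℓ, x ∉ f i := fun i hi hx => hxW (hw i hi hx)
  refine ⟨ℓ, fun i => Insert.insert x (f i), ⟨by simp only [h0], by simp only [hℓ],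
    fun i hi => ⟨?_, ?_⟩, fun i hi => (hstep i hi).insert (hxf i hi.le) (hxf (i + 1) hi)⟩,
    fun i hi => insert_subset_insert x (hw i hi)⟩
  · exact (hf i hi).1.insert fun w hw' => hx w (hw i hi hw')
  · rw [card_insert_of_notMem (hxf i hi), (hf i hi).2]

theorem of_subset_indep {C P Q : Finset V} (hC : IsIndepFinset G C) (hPC : P ⊆ C)
    (hQC : Q ⊆ C) (hPk : #P = k) (hQk : #Q = k) : TJReachableWithin G k P Q C := by
  induction hn : #(P \ Q) using Nat.strong_induction_on generalizing P with
  | _ n ih =>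
  by_cases hPQ : P ⊆ Q
  · obtain rfl := eq_of_subset_of_card_le hPQ (hQk.trans hPk.symm).le
    exact (refl (hC.mono_s7 hPC) hPk).mono_s7 hPC
  obtain ⟨y, hyP, hyQ⟩ := not_subset.1 hPQ
  obtain ⟨c, hcQ, hcP⟩ := not_subset.1 fun hQP : Q ⊆ P =>
    hPQ (eq_of_subset_of_card_le hQP (hPk.trans hQk.symm).le).ge
  have hP'C : insert c (P.erase y) ⊆ C := insert_subset (hQC hcQ) ((erase_subset _ _).trans hPC)
  have hstep := of_swap hyP hcP (hC.mono_s7 hPC) hPk (hC.mono_s7 hP'C)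
  have hrest := ih _ (hn ▸ card_insert_erase_sdiff_lt hyP hyQ hcQ) hP'C hstep.card_right rfl
  exact (hstep.trans hrest).mono_s7 (union_subset (insert_subset (hQC hcQ) hPC) subset_rfl)

end TJReachableWithin

def TJReachableWithinAtMost (G : SimpleGraph V) (k : ℕ) (I J A : Finset V) (n : ℕ) : Prop :=
  ∃ W ⊆ A, #W ≤ n ∧ TJReachableWithin G k I J W

namespace TJReachableWithinAtMost

variable {A A' : Finset V} {n n' : ℕ}

theorem mono_s7 (h : TJReachableWithinAtMost G k I J A n) (hA : A ⊆ A') (hn : n ≤ n') :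
    TJReachableWithinAtMost G k I J A' n' :=
  let ⟨W, hWA, hWn, hW⟩ := h
  ⟨W, hWA.trans hA, hWn.trans hn, hW⟩

theorem symm (h : TJReachableWithinAtMost G k I J A n) : TJReachableWithinAtMost G k J I A n :=
  let ⟨W, hWA, hWn, hW⟩ := h
  ⟨W, hWA, hWn, hW.symm⟩

theorem trans (h₁ : TJReachableWithinAtMost G k I J A n)
    (h₂ : TJReachableWithinAtMost G k J K A n') : TJReachableWithinAtMost G k I K A (n + n') :=
  let ⟨W, hWA, hWn, hW⟩ := h₁
  let ⟨W', hWA', hWn', hW'⟩ := h₂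
  ⟨W ∪ W', union_subset hWA hWA', (card_union_le _ _).trans (add_le_add hWn hWn'), hW.trans hW'⟩

end TJReachableWithinAtMost

theorem exists_not_and_tjReachableWithinAtMost {A : Finset V} {n : ℕ} {Good : Finset V → Prop}
    (hGood : ∀ I' J' ℓ' f', TJSeq G k I' J' ℓ' f' → (∀ i ≤ ℓ', f' i ⊆ A ∧ Good (f' i)) →
      TJReachableWithinAtMost G k I' J' A n)
    (hseq : TJSeq G k I J ℓ f) (hfA : ∀ i ≤ ℓ, f i ⊆ A) (hbad : ∃ i ≤ ℓ, ¬ Good (f i)) :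
    ∃ i ≤ ℓ, ¬ Good (f i) ∧ TJReachableWithinAtMost G k I (f i) A (n + 2 * k) := by
  classical
  obtain ⟨i, ⟨hiℓ, hi⟩, hmin⟩ : ∃ i, (i ≤ ℓ ∧ ¬ Good (f i)) ∧ ∀ j < i, ¬ (j ≤ ℓ ∧ ¬ Good (f j)) :=
    ⟨_, Nat.find_spec hbad, fun j => Nat.find_min hbad⟩
  refine ⟨i, hiℓ, hi, ?_⟩
  rcases i with _ | j
  · have h : TJReachableWithin G k I J A := ⟨ℓ, f, hseq, hfA⟩
    rw [hseq.1]
    exact ⟨I, h.left_subset, by rw [h.card_left]; omega, .refl h.indep_left h.card_left⟩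
  · have hgood : ∀ i ≤ j, Good (f i) := fun i hi => by
      by_contra h
      exact hmin i (by omega) ⟨by omega, h⟩
    have hjℓ : j < ℓ := hiℓ
    refine (hGood _ _ _ _ (hseq.take hjℓ.le) fun i hi => ⟨hfA i (by omega), hgood i hi⟩).trans
      ⟨f j ∪ f (j + 1), union_subset (hfA j hjℓ.le) (hfA (j + 1) hiℓ), ?_,
        .of_tjStep (hseq.step hjℓ) (hseq.indep hjℓ.le) (hseq.card hjℓ.le) (hseq.indep hiℓ)
          (hseq.card hiℓ)⟩
    exact (card_union_le _ _).trans (by rw [hseq.card hjℓ.le, hseq.card hiℓ, two_mul])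

theorem card_le_mul_of_forall_exists_mem {𝒳 : Finset (Sym2 V)} (hk : ∀ i ≤ ℓ, #(f i) ≤ k)
    (hmiss : ∀ x, ∃ i ≤ ℓ, x ∉ f i) (hhit : ∀ i ≤ ℓ, ∀ e ∈ 𝒳, ∃ x ∈ f i, x ∈ e) :
    #𝒳 ≤ k * k := by
  rcases 𝒳.eq_empty_or_nonempty with rfl | ⟨e₀, he₀⟩
  · simp
  have : Nonempty V := ⟨(hhit 0 (Nat.zero_le _) e₀ he₀).choose⟩
  choose j hjℓ hj using hmiss
  choose! x hx0 hxe using hhit 0 (Nat.zero_le _)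
  choose! y hyj hye using fun e he => hhit (j (x e)) (hjℓ _) e he
  calc #𝒳 ≤ k * #(f 0) := card_le_mul_card_image_of_maps_to hx0 k fun a _ => ?_
    _ ≤ k * k := Nat.mul_le_mul_left _ (hk 0 (Nat.zero_le _))
  refine (card_le_card_of_injOn y (fun e he => ?_) fun e₁ h₁ e₂ h₂ hy => ?_).trans (hk _ (hjℓ a))
  · obtain ⟨he𝒳, rfl⟩ := mem_filter.1 he
    exact hyj e he𝒳
  · obtain ⟨he₁, rfl⟩ := mem_filter.1 (mem_coe.1 h₁)
    obtain ⟨he₂, hx⟩ := mem_filter.1 (mem_coe.1 h₂)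
    have hpair : ∀ e ∈ 𝒳, e = s(x e, y e) := fun e he =>
      (Sym2.mem_and_mem_iff fun h : x e = y e => hj (x e) (h ▸ hyj e he)).1 ⟨hxe e he, hye e he⟩
    rw [hpair e₁ he₁, hpair e₂ he₂, hx, hy]

section Buffer

variable [DecidableRel G.Adj]

theorem exists_indepFinset_subset_card_eq {A : Finset V} {d : ℕ}
    (hdeg : ∀ a ∈ A, #{b ∈ A | G.Adj a b} ≤ d) {m : ℕ} (hA : m * (d + 1) ≤ #A) :
    ∃ C ⊆ A, IsIndepFinset G C ∧ #C = m := by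
  induction m generalizing A with
  | zero => exact ⟨∅, empty_subset _, by simp [IsIndepFinset], rfl⟩
  | succ m ih =>
    obtain ⟨a, ha⟩ := card_pos.1 (by nlinarith)
    set A' := {b ∈ A.erase a | ¬ G.Adj a b}
    have hA'A : A' ⊆ A := (filter_subset _ _).trans (erase_subset _ _)
    have hA' : m * (d + 1) ≤ #A' := by
      have hsplit := card_filter_add_card_filter_not (s := A.erase a) (G.Adj a)
      have hadj : #{b ∈ A.erase a | G.Adj a b} ≤ d :=
        (card_le_card (filter_subset_filter _ (erase_subset _ _))).trans (hdeg a ha)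
      have := card_erase_add_one ha
      nlinarith
    obtain ⟨C, hCA', hC, hCm⟩ := ih (fun b hb => (card_le_card
      (filter_subset_filter _ hA'A)).trans (hdeg b (hA'A hb))) hA'
    have haC : a ∉ C := fun h => by simpa [A'] using hCA' h
    refine ⟨insert a C, insert_subset ha (hCA'.trans hA'A), hC.insert fun w hw => ?_, ?_⟩
    · exact (mem_filter.1 (hCA' hw)).2
    · rw [card_insert_of_notMem haC, hCm]

variable {C : Finset V} {d : ℕ}

theorem exists_subset_tjReachableWithin_union (hC : IsIndepFinset G C) (hCk : k * (d + 1) < #C)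
    (hJ : IsIndepFinset G J) (hJk : #J = k) (hdeg : ∀ w ∈ J, #{c ∈ C | G.Adj w c} ≤ d) :
    ∃ F ⊆ C, TJReachableWithin G k J F (J ∪ C) := by
  induction hn : #(J \ C) using Nat.strong_induction_on generalizing J with
  | _ n ih =>
  by_cases hJC : J ⊆ C
  · exact ⟨J, hJC, (TJReachableWithin.refl hJ hJk).mono_s7 subset_union_left⟩
  obtain ⟨y, hyJ, hyC⟩ := not_subset.1 hJC
  have hblocked : #(J ∪ J.biUnion fun w => {c ∈ C | G.Adj w c}) < #C := calc
    _ ≤ #J + #J * d :=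
      (card_union_le _ _).trans (by gcongr; exact card_biUnion_le_card_mul _ _ _ hdeg)
    _ < #C := by rw [hJk]; linarith
  obtain ⟨c, hcC, hc⟩ := exists_mem_notMem_of_card_lt_card hblocked
  simp only [mem_union, mem_biUnion, mem_filter, not_or, not_exists, not_and] at hc
  have hJ' : IsIndepFinset G (insert c (J.erase y)) :=
    (hJ.mono_s7 (erase_subset _ _)).insert fun w hw h => hc.2 w (mem_of_mem_erase hw) hcC h.symm
  have hdeg' : ∀ w ∈ insert c (J.erase y), #{c' ∈ C | G.Adj w c'} ≤ d := by
    simp only [mem_insert, forall_eq_or_imp]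
    refine ⟨?_, fun w hw => hdeg w (mem_of_mem_erase hw)⟩
    rw [filter_false_of_mem fun c' hc' => hC c hcC c' hc']
    exact Nat.zero_le _
  have hstep := TJReachableWithin.of_swap hyJ hc.1 hJ hJk hJ'
  obtain ⟨F, hFC, hF⟩ :=
    ih _ (hn ▸ card_insert_erase_sdiff_lt hyJ hyC hcC) hJ' hstep.card_right hdeg' rfl
  refine ⟨F, hFC, (hstep.trans hF).mono_s7 (union_subset ?_ (union_subset ?_ subset_union_right))⟩
  · exact insert_subset (mem_union_right _ hcC) subset_union_left
  · exact insert_subset (mem_union_right _ hcC) ((erase_subset _ _).trans subset_union_left)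

theorem tjReachableWithin_union_of_buffer (hC : IsIndepFinset G C) (hCk : k * (d + 1) < #C)
    {R₁ R₂ : Finset V} (hR₁ : IsIndepFinset G R₁) (hR₁k : #R₁ = k)
    (hdeg₁ : ∀ w ∈ R₁, #{c ∈ C | G.Adj w c} ≤ d) (hR₂ : IsIndepFinset G R₂) (hR₂k : #R₂ = k)
    (hdeg₂ : ∀ w ∈ R₂, #{c ∈ C | G.Adj w c} ≤ d) :
    TJReachableWithin G k R₁ R₂ (R₁ ∪ R₂ ∪ C) := by
  obtain ⟨F₁, hF₁C, h₁⟩ := exists_subset_tjReachableWithin_union hC hCk hR₁ hR₁k hdeg₁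
  obtain ⟨F₂, hF₂C, h₂⟩ := exists_subset_tjReachableWithin_union hC hCk hR₂ hR₂k hdeg₂
  have hF := TJReachableWithin.of_subset_indep hC hF₁C hF₂C h₁.card_right h₂.card_right
  refine ((h₁.trans hF).trans h₂.symm).mono_s7 ?_
  intro z
  simp only [mem_union]
  tauto

theorem card_filter_adj_three_lt {t : ℕ} (hK : ¬ ContainsKpq G 3 t)
    {u v w : V} (huv : u ≠ v) (huw : u ≠ w) (hvw : v ≠ w) (A : Finset V) :
    #{z ∈ A | G.Adj u z ∧ G.Adj v z ∧ G.Adj w z} < t := by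
  by_contra! h
  obtain ⟨Y, hYA, hY⟩ := exists_subset_card_eq h
  have hadj : ∀ y ∈ Y, G.Adj u y ∧ G.Adj v y ∧ G.Adj w y := fun y hy => (mem_filter.1 (hYA hy)).2
  refine hK ⟨{u, v, w}, Y, disjoint_left.2 fun x hx hxY => ?_,
    card_eq_three.2 ⟨u, v, w, huv, huw, hvw, rfl⟩, hY, fun x hx y hy => ?_⟩
  · simp only [mem_insert, mem_singleton] at hx
    rcases hx with rfl | rfl | rfl
    exacts [(hadj x hxY).1.ne rfl, (hadj x hxY).2.1.ne rfl, (hadj x hxY).2.2.ne rfl]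
  · simp only [mem_insert, mem_singleton] at hx
    rcases hx with rfl | rfl | rfl <;> simp_all

end Buffer

def bufferSize (k d : ℕ) : ℕ := k * (d + 1) + 1

def pairThreshold (t k : ℕ) : ℕ := bufferSize k t * (t + 1)

def vertexThreshold (t k : ℕ) : ℕ := bufferSize k (pairThreshold t k) * (pairThreshold t k + 1)

def smallThreshold (t k : ℕ) : ℕ :=
  bufferSize k (vertexThreshold t k) * (vertexThreshold t k + 1)

def levelCost (t k n : ℕ) : ℕ :=
  smallThreshold t k + bufferSize k t + bufferSize k (pairThreshold t k) +
    bufferSize k (vertexThreshold t k) + 2 * n + 6 * k + 2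

def iterBound (c : ℕ) : ℕ → ℕ
  | 0 => c
  | m + 1 => 2 * iterBound c m + c

theorem le_iterBound (c m : ℕ) : c ≤ iterBound c m := by
  cases m <;> simp only [iterBound] <;> omega

def kernelSize (t : ℕ) : ℕ → ℕ
  | 0 => 0
  | k + 1 => iterBound (levelCost t (k + 1) (kernelSize t k)) ((k + 1) * (k + 1) + 1)

def TJKernelBound (G : SimpleGraph V) (k n : ℕ) : Prop :=
  ∀ A I J, TJReachableWithin G k I J A → TJReachableWithinAtMost G k I J A n

theorem tjKernelBound_zero : TJKernelBound G 0 0 := by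
  intro A I J h
  rw [card_eq_zero.1 h.card_left, card_eq_zero.1 h.card_right]
  exact ⟨∅, empty_subset _, le_rfl, TJReachableWithin.refl (by simp [IsIndepFinset]) rfl⟩

section Kernel

variable [DecidableRel G.Adj] {A C : Finset V} {n d : ℕ}

theorem tjReachableWithinAtMost_of_forall_mem (hprev : TJKernelBound G (k - 1) n) {x : V}
    (hseq : TJSeq G k I J ℓ f) (hfA : ∀ i ≤ ℓ, f i ⊆ A) (hx : ∀ i ≤ ℓ, x ∈ f i) :
    TJReachableWithinAtMost G k I J A (n + 1) := by
  have hxI : x ∈ I := hseq.1 ▸ hx 0 (Nat.zero_le _)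
  have hxJ : x ∈ J := hseq.2.1 ▸ hx ℓ le_rfl
  have hk : k - 1 + 1 = k :=
    Nat.sub_add_cancel (hseq.card (Nat.zero_le ℓ) ▸ card_pos.2 ⟨x, hx 0 (Nat.zero_le _)⟩)
  set A' := {z ∈ A | z ≠ x ∧ ¬ G.Adj x z}
  have herase : TJReachableWithin G (k - 1) (I.erase x) (J.erase x) A' :=
    ⟨ℓ, _, hseq.erase hx, fun i hi z hz => mem_filter.2 ⟨hfA i hi (mem_of_mem_erase hz),
      ne_of_mem_erase hz, hseq.indep hi x (hx i hi) z (mem_of_mem_erase hz)⟩⟩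
  obtain ⟨W, hWA', hWn, hW⟩ := hprev A' _ _ herase
  have hlift := hW.insert_of_forall_not_adj (fun h => (mem_filter.1 (hWA' h)).2.1 rfl)
    fun w hw => (mem_filter.1 (hWA' hw)).2.2
  rw [insert_erase hxI, insert_erase hxJ, hk] at hlift
  exact ⟨insert x W, insert_subset (hfA 0 (Nat.zero_le _) (hx 0 (Nat.zero_le _)))
    (hWA'.trans (filter_subset _ _)), (card_insert_le _ _).trans (by omega), hlift⟩

/-- The sequence is kept up to its first and from its last member that is not `Good`, and rerouted
through the buffer `C` in between. -/
theorem tjReachableWithinAtMost_of_buffer {Good : Finset V → Prop}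
    (hGood : ∀ I' J' ℓ' f', TJSeq G k I' J' ℓ' f' → (∀ i ≤ ℓ', f' i ⊆ A ∧ Good (f' i)) →
      TJReachableWithinAtMost G k I' J' A n)
    (hC : IsIndepFinset G C) (hCA : C ⊆ A) (hCk : k * (d + 1) < #C)
    (hseq : TJSeq G k I J ℓ f) (hfA : ∀ i ≤ ℓ, f i ⊆ A)
    (hdeg : ∀ i ≤ ℓ, ¬ Good (f i) → ∀ w ∈ f i, #{c ∈ C | G.Adj w c} ≤ d) :
    TJReachableWithinAtMost G k I J A (2 * n + 6 * k + #C) := by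
  by_cases hbad : ∃ i ≤ ℓ, ¬ Good (f i)
  swap
  · push Not at hbad
    exact (hGood _ _ _ _ hseq fun i hi => ⟨hfA i hi, hbad i hi⟩).mono_s7 subset_rfl (by omega)
  obtain ⟨i₁, hi₁, hbad₁, h₁⟩ := exists_not_and_tjReachableWithinAtMost hGood hseq hfA hbad
  obtain ⟨i₂, hi₂, hbad₂, h₂⟩ := exists_not_and_tjReachableWithinAtMost hGood hseq.reverse
    (fun i _ => hfA _ (Nat.sub_le _ _)) (by
      obtain ⟨i, hi, hbad⟩ := hbad
      exact ⟨ℓ - i, Nat.sub_le _ _, by rwa [Nat.sub_sub_self hi]⟩)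
  have hmid : TJReachableWithinAtMost G k (f i₁) (f (ℓ - i₂)) A (2 * k + #C) := by
    refine ⟨f i₁ ∪ f (ℓ - i₂) ∪ C, union_subset (union_subset (hfA _ hi₁) (hfA _ (Nat.sub_le _ _)))
      hCA, ?_, tjReachableWithin_union_of_buffer hC hCk (hseq.indep hi₁) (hseq.card hi₁)
      (hdeg _ hi₁ hbad₁) (hseq.indep (Nat.sub_le _ _)) (hseq.card (Nat.sub_le _ _))
      (hdeg _ (Nat.sub_le _ _) hbad₂)⟩
    exact card_union_union_le (hseq.card hi₁) (hseq.card (Nat.sub_le _ _))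
  exact ((h₁.trans hmid).trans h₂.symm).mono_s7 subset_rfl (by omega)

theorem tjReachableWithinAtMost_of_forall_card_filter_adj_le
    (hdeg : ∀ w, #{z ∈ A | G.Adj w z} ≤ d) (hA : bufferSize k d * (d + 1) ≤ #A)
    (h : TJReachableWithin G k I J A) :
    TJReachableWithinAtMost G k I J A (2 * k + bufferSize k d) := by
  obtain ⟨C, hCA, hC, hCk⟩ := exists_indepFinset_subset_card_eq (fun a _ => hdeg a) hA
  have hdegC : ∀ w, #{c ∈ C | G.Adj w c} ≤ d := fun w =>
    (card_le_card (filter_subset_filter _ hCA)).trans (hdeg w)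
  refine ⟨I ∪ J ∪ C, union_subset (union_subset h.left_subset h.subset_right) hCA, ?_,
    tjReachableWithin_union_of_buffer hC (by rw [hCk, bufferSize]; omega) h.indep_left
      h.card_left (fun w _ => hdegC w) h.symm.indep_left h.card_right (fun w _ => hdegC w)⟩
  exact hCk ▸ card_union_union_le h.card_left h.card_right

theorem tjReachableWithinAtMost_of_le_card_filter_adj (hprev : TJKernelBound G (k - 1) n)
    (hseq : TJSeq G k I J ℓ f) (hfA : ∀ i ≤ ℓ, f i ⊆ A)
    (hcodeg : ∀ u v, u ≠ v → #{z ∈ A | G.Adj u z ∧ G.Adj v z} ≤ d) {h : V}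
    (hheavy : bufferSize k d * (d + 1) ≤ #{z ∈ A | G.Adj h z}) :
    TJReachableWithinAtMost G k I J A (2 * (n + 1) + 6 * k + bufferSize k d) := by
  have hdeg : ∀ w ≠ h, ∀ S ⊆ {z ∈ A | G.Adj h z}, #{c ∈ S | G.Adj w c} ≤ d := by
    refine fun w hw S hS => (card_le_card fun c hc => ?_).trans (hcodeg h w hw.symm)
    obtain ⟨hcS, hwc⟩ := mem_filter.1 hc
    obtain ⟨hcA, hhc⟩ := mem_filter.1 (hS hcS)
    exact mem_filter.2 ⟨hcA, hhc, hwc⟩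
  obtain ⟨C, hCN, hC, hCk⟩ := exists_indepFinset_subset_card_eq
    (fun a ha => hdeg a (mem_filter.1 ha).2.ne' _ subset_rfl) hheavy
  rw [← hCk]
  refine tjReachableWithinAtMost_of_buffer (Good := (h ∈ ·)) (d := d)
    (fun _ _ _ _ hseq' hf' => tjReachableWithinAtMost_of_forall_mem hprev hseq'
      (fun i hi => (hf' i hi).1) fun i hi => (hf' i hi).2)
    hC (hCN.trans (filter_subset _ _)) (by rw [hCk, bufferSize]; omega) hseq hfA
    fun i _ hhi w hw => hdeg w (ne_of_mem_of_not_mem hw hhi) C hCN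

/-- `𝒳` holds the heavy pairs recorded so far, none of which has a common neighbour left in `A`.
As at most `k * k` pairs are met by every member of a sequence without a permanently occupied
vertex, `m` bounds the remaining depth of the recursion. -/
def HitPairsBound (G : SimpleGraph V) (k m n : ℕ) : Prop :=
  ∀ (𝒳 : Finset (Sym2 V)) (A I J : Finset V) (ℓ : ℕ) (f : ℕ → Finset V), k * k < #𝒳 + m →
    (∀ e ∈ 𝒳, ∀ z ∈ A, ∃ x ∈ e, ¬ G.Adj x z) → TJSeq G k I J ℓ f →
    (∀ i ≤ ℓ, f i ⊆ A ∧ ∀ e ∈ 𝒳, ∃ x ∈ f i, x ∈ e) → TJReachableWithinAtMost G k I J A n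

theorem HitPairsBound.tjReachableWithinAtMost_insert {m : ℕ} (hIH : HitPairsBound G k m n)
    {𝒳 : Finset (Sym2 V)} (h𝒳 : k * k < #𝒳 + (m + 1))
    (hsep : ∀ e ∈ 𝒳, ∀ z ∈ A, ∃ x ∈ e, ¬ G.Adj x z) {u v : V} (huvN : s(u, v) ∉ 𝒳)
    (hseq : TJSeq G k I J ℓ f) (hf : ∀ i ≤ ℓ, f i ⊆ A ∧ ∀ e ∈ insert s(u, v) 𝒳, ∃ x ∈ f i, x ∈ e) :
    TJReachableWithinAtMost G k I J A n := by
  set N := {z ∈ A | G.Adj u z ∧ G.Adj v z}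
  refine (hIH (insert s(u, v) 𝒳) (A \ N) I J ℓ f (by rw [card_insert_of_notMem huvN]; omega) ?_
    hseq fun i hi => ⟨fun z hz => ?_, (hf i hi).2⟩).mono_s7 sdiff_subset le_rfl
  · simp only [mem_insert, forall_eq_or_imp, Sym2.mem_iff, exists_eq_or_imp, exists_eq_left]
    refine ⟨fun z hz => ?_, fun e he z hz => hsep e he z (mem_sdiff.1 hz).1⟩
    obtain ⟨hzA, hzN⟩ := mem_sdiff.1 hz
    by_contra! h
    exact hzN (mem_filter.2 ⟨hzA, h⟩)
  · refine mem_sdiff.2 ⟨(hf i hi).1 hz, fun hzN => ?_⟩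
    obtain ⟨x, hx, hxuv⟩ := (hf i hi).2 _ (mem_insert_self _ _)
    obtain ⟨-, huz, hvz⟩ := mem_filter.1 hzN
    rcases Sym2.mem_iff.1 hxuv with rfl | rfl
    exacts [hseq.indep hi x hx z hz huz, hseq.indep hi x hx z hz hvz]

theorem tjReachableWithinAtMost_of_le_card_filter_adj_and_adj {t m : ℕ} (hK : ¬ ContainsKpq G 3 t)
    (hIH : HitPairsBound G k m n) {𝒳 : Finset (Sym2 V)} (h𝒳 : k * k < #𝒳 + (m + 1))
    (hsep : ∀ e ∈ 𝒳, ∀ z ∈ A, ∃ x ∈ e, ¬ G.Adj x z) (hseq : TJSeq G k I J ℓ f)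
    (hf : ∀ i ≤ ℓ, f i ⊆ A ∧ ∀ e ∈ 𝒳, ∃ x ∈ f i, x ∈ e) {u v : V} (huv : u ≠ v)
    (hheavy : bufferSize k t * (t + 1) ≤ #{z ∈ A | G.Adj u z ∧ G.Adj v z}) :
    TJReachableWithinAtMost G k I J A (2 * n + 6 * k + bufferSize k t) := by
  set N := {z ∈ A | G.Adj u z ∧ G.Adj v z}
  have hdeg : ∀ w, w ≠ u → w ≠ v → ∀ S ⊆ N, #{c ∈ S | G.Adj w c} ≤ t := by
    refine fun w hwu hwv S hS => (card_le_card fun c hc => ?_).trans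
      (card_filter_adj_three_lt hK huv hwu.symm hwv.symm A).le
    obtain ⟨hcS, hwc⟩ := mem_filter.1 hc
    obtain ⟨hcA, huc, hvc⟩ := mem_filter.1 (hS hcS)
    exact mem_filter.2 ⟨hcA, huc, hvc, hwc⟩
  have huvN : s(u, v) ∉ 𝒳 := fun he => by
    obtain ⟨z, hz⟩ :=
      card_pos.1 (hheavy.trans_lt' (Nat.mul_pos (Nat.succ_pos _) (Nat.succ_pos _)))
    obtain ⟨hzA, huz, hvz⟩ := mem_filter.1 hz
    obtain ⟨x, hx, hxz⟩ := hsep _ he z hzA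
    rcases Sym2.mem_iff.1 hx with rfl | rfl <;> contradiction
  obtain ⟨C, hCN, hC, hCk⟩ := exists_indepFinset_subset_card_eq (fun a ha =>
    hdeg a (mem_filter.1 ha).2.1.ne' (mem_filter.1 ha).2.2.ne' _ subset_rfl) hheavy
  rw [← hCk]
  refine tjReachableWithinAtMost_of_buffer
    (Good := fun R => ∀ e ∈ insert s(u, v) 𝒳, ∃ x ∈ R, x ∈ e) (d := t)
    (fun _ _ _ _ => hIH.tjReachableWithinAtMost_insert h𝒳 hsep huvN) hC
    (hCN.trans (filter_subset _ _)) (by rw [hCk, bufferSize]; omega) hseq (fun i hi => (hf i hi).1)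
    fun i hi hbad w hw => ?_
  have hmiss : ¬ ∃ x ∈ f i, x ∈ s(u, v) := fun h =>
    hbad fun e he => (mem_insert.1 he).elim (· ▸ h) ((hf i hi).2 e)
  exact hdeg w (fun h => hmiss ⟨w, hw, h ▸ Sym2.mem_mk_left _ _⟩)
    (fun h => hmiss ⟨w, hw, h ▸ Sym2.mem_mk_right _ _⟩) C hCN

theorem hitPairsBound {t : ℕ} (hK : ¬ ContainsKpq G 3 t) (hprev : TJKernelBound G (k - 1) n)
    (m : ℕ) : HitPairsBound G k m (iterBound (levelCost t k n) m) := by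
  induction m using Nat.strong_induction_on with
  | _ m IH =>
  intro 𝒳 A I J ℓ f h𝒳 hsep hseq hf
  have hfA : ∀ i ≤ ℓ, f i ⊆ A := fun i hi => (hf i hi).1
  have hcost := le_iterBound (levelCost t k n) m
  set c := levelCost t k n with hc
  unfold levelCost at hc
  by_cases hcommon : ∃ x, ∀ i ≤ ℓ, x ∈ f i
  · obtain ⟨x, hx⟩ := hcommon
    exact (tjReachableWithinAtMost_of_forall_mem hprev hseq hfA hx).mono_s7 subset_rfl (by omega)
  push Not at hcommon
  by_cases hsmall : #A < smallThreshold t k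
  · exact ⟨A, subset_rfl, by omega, ℓ, f, hseq, hfA⟩
  by_cases hpair : ∃ u v, u ≠ v ∧ pairThreshold t k ≤ #{z ∈ A | G.Adj u z ∧ G.Adj v z}
  · obtain ⟨u, v, huv, hheavy⟩ := hpair
    have h𝒳k := card_le_mul_of_forall_exists_mem (fun i hi => (hseq.card hi).le) hcommon
      fun i hi => (hf i hi).2
    obtain ⟨m, rfl⟩ : ∃ m', m = m' + 1 := ⟨m - 1, by omega⟩
    refine (tjReachableWithinAtMost_of_le_card_filter_adj_and_adj hK (IH m (by omega)) h𝒳 hsep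
      hseq hf huv hheavy).mono_s7 subset_rfl ?_
    rw [iterBound]
    omega
  push Not at hpair
  by_cases hvertex : ∃ h, vertexThreshold t k ≤ #{z ∈ A | G.Adj h z}
  · obtain ⟨h, hheavy⟩ := hvertex
    exact (tjReachableWithinAtMost_of_le_card_filter_adj hprev hseq hfA
      (fun u v huv => (hpair u v huv).le) hheavy).mono_s7 subset_rfl (by omega)
  · push Not at hvertex
    exact (tjReachableWithinAtMost_of_forall_card_filter_adj_le (fun w => (hvertex w).le)
      (not_lt.1 hsmall) ⟨ℓ, f, hseq, hfA⟩).mono_s7 subset_rfl (by omega)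

theorem tjKernelBound_kernelSize {t : ℕ} (hK : ¬ ContainsKpq G 3 t) :
    ∀ k, TJKernelBound G k (kernelSize t k)
  | 0 => tjKernelBound_zero
  | k + 1 => fun A I J ⟨ℓ, f, hseq, hfA⟩ =>
    hitPairsBound (k := k + 1) hK (tjKernelBound_kernelSize hK k) _ ∅ A I J ℓ f (by simp) (by simp)
      hseq (by simpa using hfA)

end Kernel

theorem k3t_kernel_exists_general (t : ℕ) :
    ∃ f : ℕ → ℕ,
      ∀ (V : Type) [Fintype V] [DecidableEq V] (G : SimpleGraph V),
        ¬ ContainsKpq G 3 t →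
        ∀ (k : ℕ) (I0 Ir : Finset V),
          IsIndepFinset G I0 → IsIndepFinset G Ir →
          I0.card = k → Ir.card = k →
          ∃ V' : Finset V, I0 ∪ Ir ⊆ V' ∧ V'.card ≤ f k ∧
            (TJReachable G k I0 Ir ↔ TJReachableWithin G k I0 Ir V') := by
  refine ⟨fun k => kernelSize t k + 2 * k, fun V _ _ G hK k I0 Ir _ _ hI0 hIr => ?_⟩
  classical
  by_cases hreach : TJReachable G k I0 Ir
  · obtain ⟨ℓ, f, hseq⟩ := hreach
    obtain ⟨W, -, hW, hreachW⟩ :=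
      tjKernelBound_kernelSize hK k univ I0 Ir ⟨ℓ, f, hseq, fun _ _ => subset_univ _⟩
    exact ⟨W, union_subset hreachW.left_subset hreachW.subset_right, by dsimp only; omega,
      fun _ => hreachW, fun _ => ⟨ℓ, f, hseq⟩⟩
  · refine ⟨I0 ∪ Ir, subset_rfl, (card_union_le _ _).trans (by dsimp only; omega), ?_⟩
    exact ⟨fun h => absurd h hreach, fun ⟨ℓ, f, hseq, _⟩ => absurd ⟨ℓ, f, hseq⟩ hreach⟩

/-- kernelization for `K_{3,t}`-forbidden graphs: there is a
function `f` of the number `k` of tokens so that reconfigurability is preserved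
on some induced subgraph of at most `f k` vertices containing `I₀ ∪ Iᵣ`. -/
theorem k3t_kernel_exists (t : ℕ) (ht : 3 ≤ t) :
    ∃ f : ℕ → ℕ,
      ∀ (V : Type) [Fintype V] [DecidableEq V] (G : SimpleGraph V),
        ¬ ContainsKpq G 3 t →
        ∀ (k : ℕ) (I0 Ir : Finset V),
          IsIndepFinset G I0 → IsIndepFinset G Ir →
          I0.card = k → Ir.card = k →
          ∃ V' : Finset V, I0 ∪ Ir ⊆ V' ∧ V'.card ≤ f k ∧
            (TJReachable G k I0 Ir ↔ TJReachableWithin G k I0 Ir V') :=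
  k3t_kernel_exists_general t
end

section
/- Let k ≥ 1 be an integer and let G = (V, E) be a finite simple graph whose vertex set is partitioned into three pairwise disjoint sets W, R, and A with |W| ≤ 2k and |R| ≤ 4k, such that every vertex of A has at least one neighbor in W ∪ R. For each subset S ⊆ W ∪ R, let N_S = {v ∈ A : N_G(v) ∩ (W ∪ R) = S}. Suppose that |N_S| ≤ 10k for every S ⊆ W ∪ R, and moreover |N_S| ≤ 2 for every S with |S| ≥ 3. Then |V| < 2^{6k+1} + 180k^3. -/
/-- if `V` is partitioned into `W`, `R`, `A` with `|W| ≤ 2k`,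
`|R| ≤ 4k`, every vertex of `A` has a neighbor in `W ∪ R`, and the classes of
`A` by neighborhood pattern in `W ∪ R` all have size at most `10k` (at most `2`
for patterns of size ≥ 3), then `|V| < 2^{6k+1} + 180k³`. -/
theorem order_bound_after_shrinking {V : Type*} [Fintype V] [DecidableEq V]
    (G : SimpleGraph V) [DecidableRel G.Adj] (k : ℕ) (hk : 1 ≤ k)
    (W R A : Finset V)
    (hWR : Disjoint W R) (hWA : Disjoint W A) (hRA : Disjoint R A)
    (hcover : W ∪ R ∪ A = Finset.univ)
    (hW : W.card ≤ 2 * k) (hR : R.card ≤ 4 * k)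
    (hAnb : ∀ v ∈ A, ∃ u ∈ W ∪ R, G.Adj v u)
    (hsmall : ∀ S ⊆ W ∪ R,
      (A.filter (fun v => (W ∪ R).filter (fun u => G.Adj v u) = S)).card ≤ 10 * k)
    (hbig : ∀ S ⊆ W ∪ R, 3 ≤ S.card →
      (A.filter (fun v => (W ∪ R).filter (fun u => G.Adj v u) = S)).card ≤ 2) :
    Fintype.card V < 2 ^ (6 * k + 1) + 180 * k ^ 3 := by
  classical
  obtain ⟨j, rfl⟩ : ∃ j, k = j + 1 := ⟨k - 1, by omega⟩
  set k := j + 1 with hkdef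
  set B : Finset V := W ∪ R with hBdef
  set c : Finset V → ℕ :=
    fun S => (A.filter (fun v => B.filter (fun u => G.Adj v u) = S)).card with hcdef
  have hBA : Disjoint B A := Finset.disjoint_union_left.mpr ⟨hWA, hRA⟩
  have hcardV : Fintype.card V = B.card + A.card := by
    rw [← Finset.card_univ, ← hcover, Finset.card_union_of_disjoint hBA]
  have hn : B.card ≤ 6 * k := by
    have := Finset.card_union_le W R
    simp only [← hBdef] at this
    omega
  set n := B.card with hndef
  set P : Finset (Finset V) := B.powerset with hPdef
  have hAsum : A.card = ∑ S ∈ P, c S :=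
    Finset.card_eq_sum_card_fiberwise
      (fun v _ => Finset.mem_powerset.mpr (Finset.filter_subset _ _))
  -- the empty pattern class is empty
  have hc0 : c ∅ = 0 := by
    rw [hcdef, Finset.card_eq_zero, Finset.filter_eq_empty_iff]
    intro v hvA hf
    obtain ⟨u, hu, hadj⟩ := hAnb v hvA
    have : u ∈ B.filter (fun u => G.Adj v u) := Finset.mem_filter.mpr ⟨hu, hadj⟩
    rw [hf] at this
    exact absurd this (Finset.notMem_empty u)
  -- split off the empty pattern
  have hsplit1 : ∑ S ∈ P, c S = ∑ S ∈ P.filter (fun S => ¬ S = ∅), c S := by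
    rw [← Finset.sum_filter_add_sum_filter_not P (fun S => S = ∅) c]
    have : P.filter (fun S => S = ∅) = {∅} := by
      rw [Finset.filter_eq']
      simp [hPdef]
    rw [this, Finset.sum_singleton, hc0, zero_add]
  set Q : Finset (Finset V) := P.filter (fun S => ¬ S = ∅) with hQdef
  set Q1 : Finset (Finset V) := Q.filter (fun S => S.card ≤ 2) with hQ1def
  set Q2 : Finset (Finset V) := Q.filter (fun S => ¬ S.card ≤ 2) with hQ2def
  have hsplit2 : ∑ S ∈ Q, c S = ∑ S ∈ Q1, c S + ∑ S ∈ Q2, c S :=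
    (Finset.sum_filter_add_sum_filter_not Q (fun S => S.card ≤ 2) c).symm
  have hsub : ∀ S ∈ Q, S ⊆ B := by
    intro S hS
    have := (Finset.mem_filter.mp hS).1
    exact Finset.mem_powerset.mp this
  have hbound1 : ∑ S ∈ Q1, c S ≤ Q1.card * (10 * k) := by
    have := Finset.sum_le_card_nsmul Q1 c (10 * k)
      (fun S hS => hsmall S (hsub S (Finset.mem_filter.mp hS).1))
    simpa [smul_eq_mul] using this
  have hbound2 : ∑ S ∈ Q2, c S ≤ Q2.card * 2 := by
    have := Finset.sum_le_card_nsmul Q2 c 2 (fun S hS => by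
      have hSQ := (Finset.mem_filter.mp hS).1
      have h3 : 3 ≤ S.card := by
        have := (Finset.mem_filter.mp hS).2
        omega
      exact hbig S (hsub S hSQ) h3)
    simpa [smul_eq_mul] using this
  -- counting the pattern sets
  have hPcard : P.card = 2 ^ n := by rw [hPdef, Finset.card_powerset]
  have hQcard : 1 + Q.card = 2 ^ n := by
    have h := Finset.card_filter_add_card_filter_not (s := P) (fun S => S = ∅)
    have : P.filter (fun S => S = ∅) = {∅} := by
      rw [Finset.filter_eq']
      simp [hPdef]
    rw [this] at h
    simp only [Finset.card_singleton] at h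
    rw [← hQdef] at h
    omega
  have hQ12 : Q1.card + Q2.card = Q.card :=
    Finset.card_filter_add_card_filter_not (s := Q) (fun S => S.card ≤ 2)
  have hQ1card : Q1.card ≤ n + n.choose 2 := by
    have hss : Q1 ⊆ B.powersetCard 1 ∪ B.powersetCard 2 := by
      intro S hS
      have hSQ := (Finset.mem_filter.mp hS).1
      have hle2 := (Finset.mem_filter.mp hS).2
      have hne : S ≠ ∅ := (Finset.mem_filter.mp hSQ).2
      have h1 : 1 ≤ S.card := Finset.card_pos.mpr (Finset.nonempty_of_ne_empty hne)
      have hSB : S ⊆ B := hsub S hSQ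
      rcases Nat.lt_or_ge S.card 2 with h | h
      · exact Finset.mem_union_left _ (Finset.mem_powersetCard.mpr ⟨hSB, by omega⟩)
      · exact Finset.mem_union_right _ (Finset.mem_powersetCard.mpr ⟨hSB, by omega⟩)
    calc Q1.card ≤ (B.powersetCard 1 ∪ B.powersetCard 2).card := Finset.card_le_card hss
      _ ≤ (B.powersetCard 1).card + (B.powersetCard 2).card := Finset.card_union_le _ _
      _ = n + n.choose 2 := by
          rw [Finset.card_powersetCard, Finset.card_powersetCard, Nat.choose_one_right]
  -- arithmetic
  have hch : n.choose 2 ≤ 18 * j ^ 2 + 33 * j + 15 := by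
    calc n.choose 2 ≤ (6 * k).choose 2 := Nat.choose_le_choose 2 hn
      _ = (6 * j + 6) * (6 * j + 5) / 2 := by
          rw [Nat.choose_two_right]
          congr 1 <;> omega
      _ = 18 * j ^ 2 + 33 * j + 15 := by
          have : (6 * j + 6) * (6 * j + 5) = 2 * (18 * j ^ 2 + 33 * j + 15) := by ring
          rw [this, Nat.mul_div_cancel_left _ (by norm_num)]
  have hq1 : Q1.card ≤ 18 * j ^ 2 + 39 * j + 21 := by
    have : n ≤ 6 * j + 6 := by omega
    omega
  have hpow : 2 ^ n ≤ 2 ^ (6 * k) := Nat.pow_le_pow_right (by norm_num) hn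
  have hAle : A.card ≤ Q1.card * (10 * k) + Q2.card * 2 := by
    rw [hAsum, hsplit1, hsplit2]
    omega
  have hsplitmul : Q1.card * (10 * k) = Q1.card * (10 * j + 8) + Q1.card * 2 := by
    rw [hkdef]; ring
  have hmul : Q1.card * (10 * j + 8) ≤ (18 * j ^ 2 + 39 * j + 21) * (10 * j + 8) :=
    Nat.mul_le_mul_right _ hq1
  have hexp1 : (18 * j ^ 2 + 39 * j + 21) * (10 * j + 8) =
      180 * j ^ 3 + 534 * j ^ 2 + 522 * j + 168 := by ring
  have hexp2 : 180 * k ^ 3 = 180 * j ^ 3 + 540 * j ^ 2 + 540 * j + 180 := by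
    rw [hkdef]; ring
  have hexp3 : 2 ^ (6 * k + 1) = 2 ^ (6 * k) + 2 ^ (6 * k) := by
    rw [pow_succ]; ring
  -- combine
  have key : Q1.card * 2 + Q2.card * 2 + 2 ≤ 2 ^ (6 * k) + 2 ^ (6 * k) := by
    have : Q1.card + Q2.card + 1 ≤ 2 ^ (6 * k) := by omega
    omega
  rw [hcardV, hexp3, hexp2]
  rw [hexp1] at hmul
  have hn6 : n ≤ 6 * j + 6 := by omega
  omega
end

section
/- Let t ≥ 3 and k ≥ 1 be integers, let G = (V, E) be a finite simple graph that is K_{3,t}-forbidden, and let I_0 and I_r be independent sets of G with |I_0| = |I_r| = k. Let R = V \ N_G[I_0 ∪ I_r] be the set of vertices that are neither in I_0 ∪ I_r nor adjacent to any vertex of I_0 ∪ I_r. If |R| ≥ C(k + t + 1, t + 2) (a binomial coefficient), then there exists a token-jumping reconfiguration sequence from I_0 to I_r. -/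
private def MyStep {V : Type*} [DecidableEq V] (G : SimpleGraph V) (k : ℕ)
    (I J : Finset V) : Prop :=
  IsIndepFinset G J ∧ J.card = k ∧ TJStep I J

private lemma reach_of_rtg {V : Type*} [DecidableEq V] (G : SimpleGraph V) (k : ℕ)
    {I J : Finset V} (hI : IsIndepFinset G I) (hIk : I.card = k)
    (h : Relation.ReflTransGen (MyStep G k) I J) : TJReachable G k I J := by
  induction h with
  | refl => exact ⟨0, fun _ => I, rfl, rfl, fun i _ => ⟨hI, hIk⟩,
      fun i hi => absurd hi (Nat.not_lt_zero i)⟩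
  | @tail b c hIb hbc ih =>
    obtain ⟨ℓ, f, h0, hl, hind, hstep⟩ := ih
    refine ⟨ℓ + 1, fun i => if i ≤ ℓ then f i else c, ?_, ?_, ?_, ?_⟩
    · simpa using h0
    · simp
    · intro i hi
      by_cases h' : i ≤ ℓ
      · simpa [h'] using hind i h'
      · simp only [if_neg h']
        exact ⟨hbc.1, hbc.2.1⟩
    · intro i hi
      rcases Nat.lt_or_ge i ℓ with h' | h'
      · have h1 : i ≤ ℓ := h'.le
        have h2 : i + 1 ≤ ℓ := h'
        simpa [h1, h2] using hstep i h'
      · have hil : i = ℓ := by omega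
        subst hil
        have h2 : ¬ (i + 1 ≤ i) := by omega
        simp only [le_refl, if_pos, if_neg h2]
        rw [hl]
        exact hbc.2.2

private lemma swap_aux {V : Type*} [DecidableEq V] (G : SimpleGraph V) :
    ∀ n (A B : Finset V), (A \ B).card ≤ n → IsIndepFinset G (A ∪ B) →
    A.card = B.card → Relation.ReflTransGen (MyStep G A.card) A B := by
  intro n
  induction n with
  | zero =>
    intro A B h hind hcard
    have hAB : A = B := Finset.eq_of_subset_of_card_le (by
      intro x hx
      by_contra hxB
      have hm : x ∈ A \ B := Finset.mem_sdiff.mpr ⟨hx, hxB⟩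
      rw [Finset.card_eq_zero.mp (Nat.le_zero.mp h)] at hm
      exact absurd hm (Finset.notMem_empty x)) hcard.ge
    subst hAB; exact .refl
  | succ n ih =>
    intro A B h hind hcard
    by_cases hAB : A = B
    · subst hAB; exact .refl
    have hne : (A \ B).Nonempty := by
      rw [Finset.sdiff_nonempty]
      intro hsub
      exact hAB (Finset.eq_of_subset_of_card_le hsub hcard.ge)
    obtain ⟨u, hu⟩ := hne
    have hcs : (B \ A).card = (A \ B).card := (Finset.card_sdiff_comm hcard).symm
    have hne' : (B \ A).Nonempty := Finset.card_pos.mp (by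
      rw [hcs]; exact Finset.card_pos.mpr ⟨u, hu⟩)
    obtain ⟨v, hv⟩ := hne'
    obtain ⟨huA, huB⟩ := Finset.mem_sdiff.mp hu
    obtain ⟨hvB, hvA⟩ := Finset.mem_sdiff.mp hv
    set A' := insert v (A.erase u) with hA'
    have hvEr : v ∉ A.erase u := fun hh => hvA (Finset.mem_of_mem_erase hh)
    have hApos : 1 ≤ A.card := Finset.card_pos.mpr ⟨u, huA⟩
    have hcardA' : A'.card = A.card := by
      rw [hA', Finset.card_insert_of_notMem hvEr, Finset.card_erase_of_mem huA]
      omega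
    have hsub : A' ∪ B ⊆ A ∪ B := by
      intro x hx
      rcases Finset.mem_union.mp hx with hx | hx
      · rcases Finset.mem_insert.mp hx with rfl | hx
        · exact Finset.mem_union_right _ hvB
        · exact Finset.mem_union_left _ (Finset.mem_of_mem_erase hx)
      · exact Finset.mem_union_right _ hx
    have hindA'B : IsIndepFinset G (A' ∪ B) := fun x hx y hy => hind x (hsub hx) y (hsub hy)
    have hindA' : IsIndepFinset G A' := fun x hx y hy =>
      hindA'B x (Finset.mem_union_left _ hx) y (Finset.mem_union_left _ hy)
    have hstep : TJStep A A' := by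
      refine ⟨u, v, huA, hvA, ?_, ?_⟩
      · ext x
        simp only [Finset.mem_sdiff, hA', Finset.mem_insert, Finset.mem_erase,
          Finset.mem_singleton]
        constructor
        · rintro ⟨hxA, hx⟩
          push_neg at hx
          by_contra hxu
          exact hx.2 hxu hxA
        · rintro rfl
          refine ⟨huA, ?_⟩
          push_neg
          exact ⟨fun hh => hvA (hh ▸ huA), fun hh => absurd rfl hh⟩
      · ext x
        simp only [Finset.mem_sdiff, hA', Finset.mem_insert, Finset.mem_erase,
          Finset.mem_singleton]
        constructor
        · rintro ⟨hx, hxA⟩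
          rcases hx with rfl | ⟨_, hx⟩
          · rfl
          · exact absurd hx hxA
        · rintro rfl
          exact ⟨Or.inl rfl, hvA⟩
    have hdiff : A' \ B = (A \ B).erase u := by
      ext x
      simp only [hA', Finset.mem_sdiff, Finset.mem_insert, Finset.mem_erase]
      constructor
      · rintro ⟨rfl | ⟨hxu, hxA⟩, hxB⟩
        · exact absurd hvB hxB
        · exact ⟨hxu, hxA, hxB⟩
      · rintro ⟨hxu, hxA, hxB⟩
        exact ⟨Or.inr ⟨hxu, hxA⟩, hxB⟩
    have hdc : (A' \ B).card ≤ n := by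
      rw [hdiff, Finset.card_erase_of_mem (Finset.mem_sdiff.mpr ⟨huA, huB⟩)]
      omega
    have htail := ih A' B hdc hindA'B (hcardA'.trans hcard)
    rw [hcardA'] at htail
    exact Relation.ReflTransGen.head ⟨hindA', hcardA', hstep⟩ htail

private lemma my_ramsey {V : Type*} [DecidableEq V] (G : SimpleGraph V) [DecidableRel G.Adj] :
    ∀ n a b (S : Finset V), a + b ≤ n → (a + b).choose a ≤ S.card →
      (∃ T ⊆ S, T.card = a + 1 ∧ ∀ u ∈ T, ∀ v ∈ T, u ≠ v → G.Adj u v) ∨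
      (∃ T ⊆ S, T.card = b + 1 ∧ IsIndepFinset G T) := by
  intro n
  induction n with
  | zero =>
    intro a b S hab hS
    have ha : a = 0 := by omega
    have hb : b = 0 := by omega
    subst ha; subst hb
    simp only [Nat.choose_self] at hS
    obtain ⟨v, hv⟩ := Finset.card_pos.mp hS
    refine Or.inl ⟨{v}, Finset.singleton_subset_iff.mpr hv, Finset.card_singleton v, ?_⟩
    intro x hx y hy hxy
    rw [Finset.mem_singleton] at hx hy
    exact absurd (hx.trans hy.symm) hxy
  | succ n ih =>
    intro a b S hab hS
    have hSne : S.Nonempty := Finset.card_pos.mp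
      (lt_of_lt_of_le (Nat.choose_pos (Nat.le_add_right a b)) hS)
    obtain ⟨v, hv⟩ := hSne
    match a, b with
    | 0, b =>
      refine Or.inl ⟨{v}, Finset.singleton_subset_iff.mpr hv, Finset.card_singleton v, ?_⟩
      intro x hx y hy hxy
      rw [Finset.mem_singleton] at hx hy
      exact absurd (hx.trans hy.symm) hxy
    | a + 1, 0 =>
      refine Or.inr ⟨{v}, Finset.singleton_subset_iff.mpr hv, Finset.card_singleton v, ?_⟩
      intro x hx y hy
      rw [Finset.mem_singleton] at hx hy
      subst hx; subst hy
      exact G.irrefl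
    | a + 1, b + 1 =>
      set N := (S.erase v).filter (fun u => G.Adj v u) with hN
      set M := (S.erase v).filter (fun u => ¬ G.Adj v u) with hM
      have hNM : N.card + M.card = (S.erase v).card :=
        Finset.card_filter_add_card_filter_not (fun u => G.Adj v u)
      have hEc : (S.erase v).card = S.card - 1 := Finset.card_erase_of_mem hv
      have hPascal : (a + 1 + (b + 1)).choose (a + 1)
          = (a + (b + 1)).choose a + (a + (b + 1)).choose (a + 1) := by
        have h1 : a + 1 + (b + 1) = (a + (b + 1)) + 1 := by omega
        rw [h1, Nat.choose_succ_succ]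
      have hSpos : 1 ≤ S.card := Finset.card_pos.mpr ⟨v, hv⟩
      by_cases hNc : (a + (b + 1)).choose a ≤ N.card
      · rcases ih a (b + 1) N (by omega) hNc with ⟨T, hTN, hTc, hTcl⟩ | ⟨T, hTN, hTc, hTi⟩
        · -- clique T of size a+1 in neighbors of v
          have hvT : v ∉ T := fun hh =>
            Finset.notMem_erase v S (Finset.mem_of_mem_filter v (hTN hh))
          refine Or.inl ⟨insert v T, ?_, ?_, ?_⟩
          · intro x hx
            rcases Finset.mem_insert.mp hx with rfl | hx
            · exact hv
            · exact Finset.mem_of_mem_erase (Finset.mem_of_mem_filter x (hTN hx))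
          · rw [Finset.card_insert_of_notMem hvT, hTc]
          · intro x hx y hy hxy
            rcases Finset.mem_insert.mp hx with hx' | hx'
            · rcases Finset.mem_insert.mp hy with hy' | hy'
              · exact absurd (hx'.trans hy'.symm) hxy
              · exact hx' ▸ (Finset.mem_filter.mp (hTN hy')).2
            · rcases Finset.mem_insert.mp hy with hy' | hy'
              · exact hy' ▸ ((Finset.mem_filter.mp (hTN hx')).2).symm
              · exact hTcl x hx' y hy' hxy
        · exact Or.inr ⟨T, fun x hx =>
            Finset.mem_of_mem_erase (Finset.mem_of_mem_filter x (hTN hx)), hTc, hTi⟩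
      · have hMc : (a + 1 + b).choose (a + 1) ≤ M.card := by
          have he1 : a + (b + 1) = a + 1 + b := by omega
          rw [← he1]
          omega
        rcases ih (a + 1) b M (by omega) hMc with ⟨T, hTM, hTc, hTcl⟩ | ⟨T, hTM, hTc, hTi⟩
        · exact Or.inl ⟨T, fun x hx =>
            Finset.mem_of_mem_erase (Finset.mem_of_mem_filter x (hTM hx)), hTc, hTcl⟩
        · -- independent T of size b+1 among non-neighbors of v
          have hvT : v ∉ T := fun hh =>
            Finset.notMem_erase v S (Finset.mem_of_mem_filter v (hTM hh))
          refine Or.inr ⟨insert v T, ?_, ?_, ?_⟩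
          · intro x hx
            rcases Finset.mem_insert.mp hx with rfl | hx
            · exact hv
            · exact Finset.mem_of_mem_erase (Finset.mem_of_mem_filter x (hTM hx))
          · rw [Finset.card_insert_of_notMem hvT, hTc]
          · intro x hx y hy
            rcases Finset.mem_insert.mp hx with hx' | hx'
            · rcases Finset.mem_insert.mp hy with hy' | hy'
              · rw [hx', hy']; exact G.irrefl
              · exact hx' ▸ (Finset.mem_filter.mp (hTM hy')).2
            · rcases Finset.mem_insert.mp hy with hy' | hy'
              · exact fun hadj => (Finset.mem_filter.mp (hTM hx')).2 (hy' ▸ hadj.symm)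
              · exact hTi x hx' y hy'

/-- if the set `R` of vertices outside the closed neighborhood of
`I₀ ∪ Iᵣ` has at least `C(k+t+1, t+2)` vertices in a `K_{3,t}`-forbidden graph,
then `I₀` can be reconfigured into `Iᵣ`. -/
theorem large_remainder_gives_sequence {V : Type*} [Fintype V] [DecidableEq V]
    (G : SimpleGraph V) [DecidableRel G.Adj] (t k : ℕ) (ht : 3 ≤ t) (hk : 1 ≤ k)
    (hforb : ¬ ContainsKpq G 3 t) (I0 Ir : Finset V)
    (hI0 : IsIndepFinset G I0) (hIr : IsIndepFinset G Ir)
    (hI0k : I0.card = k) (hIrk : Ir.card = k)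
    (hR : (k + t + 1).choose (t + 2) ≤
      (Finset.univ.filter
        (fun v => v ∉ I0 ∪ Ir ∧ ∀ u ∈ I0 ∪ Ir, ¬ G.Adj u v)).card) :
    TJReachable G k I0 Ir := by
  classical
  set R := Finset.univ.filter
      (fun v => v ∉ I0 ∪ Ir ∧ ∀ u ∈ I0 ∪ Ir, ¬ G.Adj u v) with hRdef
  obtain ⟨k', rfl⟩ : ∃ k', k = k' + 1 := ⟨k - 1, by omega⟩
  have hch : ((t + 2) + k').choose (t + 2) ≤ R.card := by
    have he : k' + 1 + t + 1 = (t + 2) + k' := by omega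
    rwa [he] at hR
  rcases my_ramsey G ((t + 2) + k') (t + 2) k' R le_rfl hch with
    ⟨T, hTR, hTc, hTcl⟩ | ⟨S, hSR, hSc, hSind⟩
  · exfalso
    obtain ⟨X, hXT, hXc⟩ := Finset.exists_subset_card_eq (show 3 ≤ T.card by omega)
    refine hforb ⟨X, T \ X, Finset.disjoint_sdiff, hXc, ?_, ?_⟩
    · rw [Finset.card_sdiff_of_subset hXT, hTc, hXc]
      omega
    · intro x hx y hy
      obtain ⟨hyT, hyX⟩ := Finset.mem_sdiff.mp hy
      exact hTcl x (hXT hx) y hyT (fun h => hyX (h ▸ hx))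
  · have hRprop : ∀ x ∈ R, x ∉ I0 ∪ Ir ∧ ∀ u ∈ I0 ∪ Ir, ¬ G.Adj u x := by
      intro x hx
      exact (Finset.mem_filter.mp hx).2
    have hind1 : IsIndepFinset G (I0 ∪ S) := by
      intro u hu w hw
      rcases Finset.mem_union.mp hu with h1 | h1 <;> rcases Finset.mem_union.mp hw with h2 | h2
      · exact hI0 u h1 w h2
      · exact (hRprop w (hSR h2)).2 u (Finset.mem_union_left _ h1)
      · exact fun h => (hRprop u (hSR h1)).2 w (Finset.mem_union_left _ h2) h.symm
      · exact hSind u h1 w h2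
    have hind2 : IsIndepFinset G (S ∪ Ir) := by
      intro u hu w hw
      rcases Finset.mem_union.mp hu with h1 | h1 <;> rcases Finset.mem_union.mp hw with h2 | h2
      · exact hSind u h1 w h2
      · exact fun h => (hRprop u (hSR h1)).2 w (Finset.mem_union_right _ h2) h.symm
      · exact (hRprop w (hSR h2)).2 u (Finset.mem_union_right _ h1)
      · exact hIr u h1 w h2
    have r1 := swap_aux G (I0 \ S).card I0 S le_rfl hind1 (hI0k.trans hSc.symm)
    have r2 := swap_aux G (S \ Ir).card S Ir le_rfl hind2 (hSc.trans hIrk.symm)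
    rw [hI0k] at r1
    rw [hSc] at r2
    exact reach_of_rtg G (k' + 1) hI0 hI0k (r1.trans r2)
end
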